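/- arXiv:1904.05283 — 4 statements merged into one kernel-verified Lean document; each statement's English description precedes it below -/
import Mathlib

section
/- Assume Assumption (Well-and-walls). Then for every b > 0 and every d > 0, ℙ( c_{-1} ≤ b or 1/c_0 ≤ d | ρ_0 > t ) → 0 as t → ∞; equivalently, conditionally on ρ_0 > t, both c_{-1} and 1/c_0 tend to +∞ in probability. -/
open MeasureTheory ProbabilityTheory Filter Real

variable {Ω : Type*}

/-- A measurable function `L : (0,∞) → (0,∞)` is slowly varying if
`L(a t)/L(t) → 1` as `t → ∞` for every `a > 0`. -/
def SlowlyVarying (L : ℝ → ℝ) : Prop :=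
  Measurable L ∧ (∀ t : ℝ, 0 < t → 0 < L t) ∧
    ∀ a : ℝ, 0 < a → Tendsto (fun t => L (a * t) / L t) atTop (nhds 1)

/-- `ρ_x = e^{-λ} c_{x-1} / c_x`. -/
noncomputable def rho (lam : ℝ) (c : ℤ → Ω → ℝ) (x : ℤ) (ω : Ω) : ℝ :=
  Real.exp (-lam) * c (x - 1) ω / c x ω

/-- `ρ_x^{(k)} = e^{-λ(k+1)} c_{x-1} / c_{x+k}`. -/
noncomputable def rhoK (lam : ℝ) (c : ℤ → Ω → ℝ) (x : ℤ) (k : ℕ) (ω : Ω) : ℝ :=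
  Real.exp (-lam * ((k : ℝ) + 1)) * c (x - 1) ω / c (x + (k : ℤ)) ω

/-- `q_n = (log n)^{1/4}`. -/
noncomputable def qseq (n : ℕ) : ℝ := Real.log n ^ ((1 : ℝ) / 4)

lemma tail_ratio_lim {L : ℝ → ℝ} {r : ℝ} (hr : 0 < r) (hsv : SlowlyVarying L)
    {T : ℝ → ℝ} (hT : ∀ s : ℝ, 1 < s → T s = L s * s ^ (-r))
    {x : ℝ} (hx : 0 < x) :
    Tendsto (fun s => T (s / x) / T s) atTop (nhds (x ^ r)) := by
  have h1 : Tendsto (fun s => L ((1/x) * s) / L s * x ^ r) atTop (nhds (1 * x ^ r)) :=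
    (hsv.2.2 (1/x) (by positivity)).mul_const _
  rw [one_mul] at h1
  refine h1.congr' ?_
  filter_upwards [eventually_gt_atTop (1:ℝ), eventually_gt_atTop x] with s hs1 hsx
  have hs0 : 0 < s := lt_trans one_pos hs1
  have hsx1 : 1 < s / x := (one_lt_div hx).2 hsx
  have hL : L s ≠ 0 := (hsv.2.1 s hs0).ne'
  have hsr : s ^ (-r) ≠ 0 := (Real.rpow_pos_of_pos hs0 _).ne'
  have h2 : (s / x) ^ (-r) = s ^ (-r) * x ^ r := by
    rw [Real.rpow_neg (by positivity), Real.rpow_neg hs0.le,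
      Real.div_rpow hs0.le hx.le]
    rw [inv_div]
    rw [div_eq_mul_inv, mul_comm]
  have h3 : (1/x) * s = s / x := by rw [one_div, inv_mul_eq_div]
  rw [h3, hT s hs1, hT _ hsx1, h2]
  field_simp

lemma moment_div {Ω : Type*} [MeasurableSpace Ω] (P : Measure Ω) [IsProbabilityMeasure P]
    (W : Ω → ℝ) (hW : Measurable W) (hWpos : ∀ ω, 0 < W ω)
    {a r : ℝ} (ha : 0 < a) (har : a ≤ r)
    (hint : ¬ Integrable (fun ω => W ω ^ a) P) (C : ℝ) :
    ∃ N : ℕ, C < ∑ j ∈ Finset.range N,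
      (P (W ⁻¹' Set.Ico ((2:ℝ)^j) ((2:ℝ)^(j+1)))).toReal * ((2:ℝ)^j) ^ r := by
  have hr : 0 < r := lt_of_lt_of_le ha har
  set I : ℕ → Set Ω := fun j => W ⁻¹' Set.Ico ((2:ℝ)^j) ((2:ℝ)^(j+1)) with hI
  have hImeas : ∀ j, MeasurableSet (I j) := fun j => hW measurableSet_Ico
  have hmeasf : Measurable (fun ω => W ω ^ a) := hW.pow measurable_const
  have hlint : ∫⁻ ω, ENNReal.ofReal (W ω ^ a) ∂P = ⊤ := by
    by_contra h
    apply hint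
    refine ⟨hmeasf.aestronglyMeasurable, ?_⟩
    rw [hasFiniteIntegral_iff_ofReal
      (Eventually.of_forall fun ω => (Real.rpow_pos_of_pos (hWpos ω) a).le)]
    exact lt_top_iff_ne_top.2 h
  set G : Ω → ENNReal := fun ω => ∑' j : ℕ,
    (I j).indicator (fun _ => ENNReal.ofReal (((2:ℝ)^j) ^ r * (2:ℝ) ^ r)) ω with hG
  have hpt : ∀ ω, ENNReal.ofReal (W ω ^ a) ≤ 1 + G ω := by
    intro ω
    rcases lt_or_ge (W ω) 1 with h1 | h1
    · calc ENNReal.ofReal (W ω ^ a) ≤ ENNReal.ofReal 1 :=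
            ENNReal.ofReal_le_ofReal (Real.rpow_le_one (hWpos ω).le h1.le ha.le)
        _ = 1 := ENNReal.ofReal_one
        _ ≤ 1 + G ω := le_self_add
    · obtain ⟨j, hj1, hj2⟩ : ∃ j : ℕ, (2:ℝ)^j ≤ W ω ∧ W ω < 2^(j+1) := by
        refine ⟨⌊Real.logb 2 (W ω)⌋₊, ?_, ?_⟩
        · have h0 : (0:ℝ) ≤ Real.logb 2 (W ω) := Real.logb_nonneg one_lt_two h1
          calc (2:ℝ)^(⌊Real.logb 2 (W ω)⌋₊) = (2:ℝ) ^ ((⌊Real.logb 2 (W ω)⌋₊ : ℝ)) :=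
                (Real.rpow_natCast 2 _).symm
            _ ≤ 2 ^ (Real.logb 2 (W ω)) :=
                Real.rpow_le_rpow_of_exponent_le one_le_two (Nat.floor_le h0)
            _ = W ω := Real.rpow_logb two_pos (by norm_num) (hWpos ω)
        · calc W ω = 2 ^ Real.logb 2 (W ω) :=
                (Real.rpow_logb two_pos (by norm_num) (hWpos ω)).symm
            _ < 2 ^ ((⌊Real.logb 2 (W ω)⌋₊ : ℝ) + 1) :=
                Real.rpow_lt_rpow_of_exponent_lt one_lt_two (Nat.lt_floor_add_one _)
            _ = 2 ^ (⌊Real.logb 2 (W ω)⌋₊ + 1) := by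
                rw [← Real.rpow_natCast 2 (⌊Real.logb 2 (W ω)⌋₊ + 1)]
                push_cast
                ring_nf
      have hmem : ω ∈ I j := ⟨hj1, hj2⟩
      have hb1 : W ω ^ a ≤ ((2:ℝ)^j) ^ r * 2 ^ r := by
        calc W ω ^ a ≤ W ω ^ r := Real.rpow_le_rpow_of_exponent_le h1 har
          _ ≤ ((2:ℝ)^(j+1)) ^ r := Real.rpow_le_rpow (hWpos ω).le hj2.le hr.le
          _ = ((2:ℝ)^j) ^ r * 2 ^ r := by
              rw [pow_succ, Real.mul_rpow (by positivity) (by norm_num)]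
      calc ENNReal.ofReal (W ω ^ a) ≤ ENNReal.ofReal (((2:ℝ)^j)^r * 2^r) :=
            ENNReal.ofReal_le_ofReal hb1
        _ = (I j).indicator (fun _ => ENNReal.ofReal (((2:ℝ)^j)^r * 2^r)) ω :=
            (Set.indicator_of_mem hmem (fun _ => ENNReal.ofReal (((2:ℝ)^j)^r * 2^r))).symm
        _ ≤ G ω := ENNReal.le_tsum j
        _ ≤ 1 + G ω := le_add_self
  have hGint : ∫⁻ ω, (1 + G ω) ∂P
      = 1 + ∑' j : ℕ, ENNReal.ofReal (((2:ℝ)^j)^r * (2:ℝ)^r) * P (I j) := by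
    rw [lintegral_add_left measurable_const]
    congr 1
    · simp
    · rw [hG, lintegral_tsum (fun j => (measurable_const.indicator (hImeas j)).aemeasurable)]
      congr 1
      funext j
      exact lintegral_indicator_const (hImeas j) _
  have hsumtop : ∑' j : ℕ, ENNReal.ofReal (((2:ℝ)^j)^r * (2:ℝ)^r) * P (I j) = ⊤ := by
    have hle : (⊤ : ENNReal) ≤ ∫⁻ ω, (1 + G ω) ∂P := by
      rw [← hlint]; exact lintegral_mono hpt
    rw [hGint] at hle
    have := top_le_iff.mp hle
    rcases ENNReal.add_eq_top.mp this with h | h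
    · exact absurd h (by simp)
    · exact h
  have hsumtop2 : ∑' j : ℕ, ENNReal.ofReal (((2:ℝ)^j)^r) * P (I j) = ⊤ := by
    by_contra h
    apply absurd hsumtop
    have h2r : ENNReal.ofReal ((2:ℝ)^r) ≠ ⊤ := ENNReal.ofReal_ne_top
    have : ∑' j : ℕ, ENNReal.ofReal (((2:ℝ)^j)^r * (2:ℝ)^r) * P (I j)
        = (∑' j : ℕ, ENNReal.ofReal (((2:ℝ)^j)^r) * P (I j)) * ENNReal.ofReal ((2:ℝ)^r) := by
      rw [← ENNReal.tsum_mul_right]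
      congr 1; funext j
      rw [ENNReal.ofReal_mul (by positivity)]
      ring
    rw [this]
    exact ENNReal.mul_ne_top h h2r
  rw [ENNReal.tsum_eq_iSup_sum] at hsumtop2
  obtain ⟨F, hF⟩ : ∃ F : Finset ℕ, ENNReal.ofReal (max C 0)
      < ∑ j ∈ F, ENNReal.ofReal (((2:ℝ)^j)^r) * P (I j) := by
    exact lt_iSup_iff.mp (by rw [hsumtop2]; exact ENNReal.ofReal_lt_top)
  set N := F.sup id + 1 with hN
  have hFsub : F ⊆ Finset.range N := by
    intro j hj
    exact Finset.mem_range.mpr (Nat.lt_succ_of_le (Finset.le_sup (f := id) hj))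
  have hle2 : ∑ j ∈ F, ENNReal.ofReal (((2:ℝ)^j)^r) * P (I j)
      ≤ ∑ j ∈ Finset.range N, ENNReal.ofReal (((2:ℝ)^j)^r) * P (I j) :=
    Finset.sum_le_sum_of_subset hFsub
  have hlt : ENNReal.ofReal (max C 0)
      < ∑ j ∈ Finset.range N, ENNReal.ofReal (((2:ℝ)^j)^r) * P (I j) := lt_of_lt_of_le hF hle2
  have hfin : ∑ j ∈ Finset.range N, ENNReal.ofReal (((2:ℝ)^j)^r) * P (I j) ≠ ⊤ := by
    refine (ENNReal.sum_lt_top.mpr ?_).ne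
    intro j _
    exact ENNReal.mul_lt_top ENNReal.ofReal_lt_top (measure_lt_top P _)
  refine ⟨N, ?_⟩
  have : max C 0 < (∑ j ∈ Finset.range N, ENNReal.ofReal (((2:ℝ)^j)^r) * P (I j)).toReal :=
    (ENNReal.ofReal_lt_iff_lt_toReal (le_max_right C 0) hfin).mp hlt
  calc C ≤ max C 0 := le_max_left C 0
    _ < (∑ j ∈ Finset.range N, ENNReal.ofReal (((2:ℝ)^j)^r) * P (I j)).toReal := this
    _ = ∑ j ∈ Finset.range N, (P (I j)).toReal * ((2:ℝ)^j) ^ r := by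
        rw [ENNReal.toReal_sum (fun j _ => (ENNReal.mul_lt_top ENNReal.ofReal_lt_top
          (measure_lt_top P _)).ne)]
        refine Finset.sum_congr rfl fun j _ => ?_
        rw [ENNReal.toReal_mul, ENNReal.toReal_ofReal (by positivity)]
        ring

lemma one_sided {Ω : Type*} [MeasurableSpace Ω] (P : Measure Ω) [IsProbabilityMeasure P]
    (U V : Ω → ℝ) (hUm : Measurable U) (hVm : Measurable V)
    (hUpos : ∀ ω, 0 < U ω)
    (hind : IndepFun V U P)
    {L : ℝ → ℝ} {r : ℝ} (hr : 0 < r) (hsv : SlowlyVarying L)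
    (hT : ∀ s : ℝ, 1 < s → (P {ω | s < U ω}).toReal = L s * s ^ (-r))
    (hmom : ∀ C : ℝ, ∃ N : ℕ, C < ∑ j ∈ Finset.range N,
        (P (V ⁻¹' Set.Ico ((2:ℝ)^j) ((2:ℝ)^(j+1)))).toReal * ((2:ℝ)^j) ^ r)
    {b : ℝ} (hb : 0 < b) :
    Tendsto (fun s => (P {ω | s / b < U ω}).toReal / (P {ω | s < V ω * U ω}).toReal)
      atTop (nhds 0) := by
  have hbr : (0:ℝ) < b ^ r := Real.rpow_pos_of_pos hb r
  set TU : ℝ → ℝ := fun u => (P {ω | u < U ω}).toReal with hTU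
  have hTUnn : ∀ u, 0 ≤ TU u := fun u => ENNReal.toReal_nonneg
  have hTUpos : ∀ u : ℝ, 1 < u → 0 < TU u := by
    intro u hu
    rw [hTU]
    simp only
    rw [hT u hu]
    have := hsv.2.1 u (lt_trans one_pos hu)
    positivity
  rw [NormedAddCommGroup.tendsto_nhds_zero]
  intro ε hε
  obtain ⟨N, hN⟩ := hmom (4 * b ^ r / ε)
  set p : ℕ → ℝ := fun j => (P (V ⁻¹' Set.Ico ((2:ℝ)^j) ((2:ℝ)^(j+1)))).toReal with hp
  set S : ℝ := ∑ j ∈ Finset.range N, p j * ((2:ℝ)^j) ^ r with hS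
  have hpnn : ∀ j, 0 ≤ p j := fun j => ENNReal.toReal_nonneg
  have hS0 : 0 < S := by
    refine lt_of_le_of_lt ?_ hN
    positivity
  -- eventual overestimate of the numerator
  have hev1 : ∀ᶠ s in atTop, TU (s / b) < 2 * b ^ r * TU s := by
    have htends := tail_ratio_lim hr hsv hT hb (T := TU)
    have h2 : b ^ r < 2 * b ^ r := by linarith
    filter_upwards [htends.eventually_lt_const h2, eventually_gt_atTop (1:ℝ)] with s h hs1
    have := hTUpos s hs1
    calc TU (s/b) = TU (s/b) / TU s * TU s := by field_simp
      _ < 2 * b ^ r * TU s := by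
          exact mul_lt_mul_of_pos_right h this
  -- eventual underestimate of the denominator pieces
  have hev2 : ∀ᶠ s in atTop, ∀ j ∈ Finset.range N,
      ((2:ℝ)^j) ^ r / 2 * TU s < TU (s / (2:ℝ)^j) := by
    rw [eventually_all_finset]
    intro j _
    have h2jpos : (0:ℝ) < (2:ℝ)^j := by positivity
    have htends := tail_ratio_lim hr hsv hT h2jpos (T := TU)
    have hhalf : ((2:ℝ)^j) ^ r / 2 < ((2:ℝ)^j) ^ r :=
      half_lt_self (Real.rpow_pos_of_pos h2jpos r)
    filter_upwards [htends.eventually_const_lt hhalf, eventually_gt_atTop (1:ℝ)] with s h hs1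
    have hTs := hTUpos s hs1
    calc ((2:ℝ)^j) ^ r / 2 * TU s < TU (s / 2^j) / TU s * TU s :=
          mul_lt_mul_of_pos_right h hTs
      _ = TU (s / 2^j) := by field_simp
  -- denominator lower bound (valid for all s)
  have hevD : ∀ s : ℝ, ∑ j ∈ Finset.range N, p j * TU (s / (2:ℝ)^j)
      ≤ (P {ω | s < V ω * U ω}).toReal := by
    intro s
    set B : ℕ → Set Ω := fun j =>
      V ⁻¹' Set.Ico ((2:ℝ)^j) ((2:ℝ)^(j+1)) ∩ U ⁻¹' Set.Ioi (s / (2:ℝ)^j) with hB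
    have hBmeas : ∀ j ∈ Finset.range N, MeasurableSet (B j) := fun j _ =>
      (hVm measurableSet_Ico).inter (hUm measurableSet_Ioi)
    have hBdisj : (↑(Finset.range N) : Set ℕ).PairwiseDisjoint B := by
      intro i _ j _ hij
      refine Set.disjoint_left.mpr ?_
      rintro ω ⟨⟨hi1, hi2⟩, -⟩ ⟨⟨hj1, hj2⟩, -⟩
      rcases lt_or_gt_of_ne hij with h | h
      · have : (2:ℝ)^(i+1) ≤ (2:ℝ)^j := by
          apply pow_le_pow_right₀ one_le_two h
        linarith
      · have : (2:ℝ)^(j+1) ≤ (2:ℝ)^i := by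
          apply pow_le_pow_right₀ one_le_two h
        linarith
    have hBsub : (⋃ j ∈ Finset.range N, B j) ⊆ {ω | s < V ω * U ω} := by
      intro ω hω
      simp only [Set.mem_iUnion] at hω
      obtain ⟨j, _, ⟨hV1, hV2⟩, hU1⟩ := hω
      simp only [Set.mem_setOf_eq]
      have h2jpos : (0:ℝ) < (2:ℝ)^j := by positivity
      have hU0 : 0 < U ω := hUpos ω
      calc s = (2:ℝ)^j * (s / (2:ℝ)^j) := by field_simp
        _ < (2:ℝ)^j * U ω := by
            exact mul_lt_mul_of_pos_left hU1 h2jpos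
        _ ≤ V ω * U ω := mul_le_mul_of_nonneg_right hV1 hU0.le
    have hkey : ∑ j ∈ Finset.range N, P (B j) ≤ P {ω | s < V ω * U ω} := by
      rw [← measure_biUnion_finset hBdisj hBmeas]
      exact measure_mono hBsub
    have hsum : (∑ j ∈ Finset.range N, P (B j)).toReal
        = ∑ j ∈ Finset.range N, p j * TU (s / (2:ℝ)^j) := by
      rw [ENNReal.toReal_sum (fun j _ => measure_ne_top P _)]
      refine Finset.sum_congr rfl fun j _ => ?_
      rw [hB]
      simp only
      rw [hind.measure_inter_preimage_eq_mul _ _ measurableSet_Ico measurableSet_Ioi,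
        ENNReal.toReal_mul]
      rfl
    calc ∑ j ∈ Finset.range N, p j * TU (s / (2:ℝ)^j)
        = (∑ j ∈ Finset.range N, P (B j)).toReal := hsum.symm
      _ ≤ (P {ω | s < V ω * U ω}).toReal :=
          ENNReal.toReal_mono (measure_ne_top P _) hkey
  filter_upwards [hev1, hev2, eventually_gt_atTop (1:ℝ)] with s h1 h2 hs1
  have hTs := hTUpos s hs1
  set D : ℝ := (P {ω | s < V ω * U ω}).toReal with hD
  have hDlow : S * TU s / 2 ≤ D := by
    have step : S * TU s / 2 ≤ ∑ j ∈ Finset.range N, p j * TU (s / (2:ℝ)^j) := by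
      rw [hS, Finset.sum_mul, Finset.sum_div]
      refine Finset.sum_le_sum fun j hj => ?_
      have := (h2 j hj).le
      calc p j * ((2:ℝ)^j) ^ r * TU s / 2 = p j * (((2:ℝ)^j) ^ r / 2 * TU s) := by ring
        _ ≤ p j * TU (s / (2:ℝ)^j) := mul_le_mul_of_nonneg_left this (hpnn j)
    exact le_trans step (hevD s)
  have hDpos : 0 < D := lt_of_lt_of_le (by positivity) hDlow
  have hratio : TU (s / b) / D < ε := by
    calc TU (s / b) / D ≤ TU (s / b) / (S * TU s / 2) :=
          div_le_div_of_nonneg_left (hTUnn _) (by positivity) hDlow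
      _ < (2 * b ^ r * TU s) / (S * TU s / 2) := by
          exact div_lt_div_of_pos_right h1 (by positivity)
      _ = 4 * b ^ r / S := by field_simp; ring
      _ < ε := by
          rw [div_lt_iff₀ hS0]
          have := (div_lt_iff₀ hε).mp hN
          linarith
  have : (P {ω | s / b < U ω}).toReal / (P {ω | s < V ω * U ω}).toReal = TU (s / b) / D := rfl
  rw [Real.norm_eq_abs, this, abs_of_nonneg (div_nonneg (hTUnn _) hDpos.le)]
  exact hratio

theorem statement5
    {Ω : Type*} [MeasurableSpace Ω] (P : Measure Ω) [IsProbabilityMeasure P]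
    (c : ℤ → Ω → ℝ) (lam : ℝ) (hlam : 0 < lam)
    (hmeas : ∀ x, Measurable (c x)) (hpos : ∀ x ω, 0 < c x ω)
    (hindep : iIndepFun c P)
    (hident : ∀ x, IdentDistrib (c x) (c 0) P P)
    (Linf L0 : ℝ → ℝ) (ainf a0 : ℝ) (hainf : 0 < ainf) (ha0 : 0 < a0)
    (halpha : min a0 ainf < 1)
    (hsvinf : SlowlyVarying Linf) (hsv0 : SlowlyVarying L0)
    (htailinf : ∀ t : ℝ, 1 < t → (P {ω | t < c 0 ω}).toReal = Linf t * t ^ (-ainf))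
    (htail0 : ∀ ε : ℝ, 0 < ε → ε < 1 → (P {ω | c 0 ω < ε}).toReal = L0 (1 / ε) * ε ^ a0)
    (heqcase : a0 = ainf → ∃ (phiInf phi0 : ℝ → ℝ) (gInf g0 : ℝ),
      SlowlyVarying phiInf ∧ SlowlyVarying phi0 ∧ gInf ≠ -1 ∧ g0 ≠ -1 ∧
      (∀ x : ℝ, 1 < x → Linf x = phiInf (Real.log x) * Real.log x ^ gInf) ∧
      (∀ x : ℝ, 1 < x → L0 x = phi0 (Real.log x) * Real.log x ^ g0))
    (hwawPos : ¬ Integrable (fun ω => c 0 ω ^ (min a0 ainf)) P)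
    (hwawNeg : ¬ Integrable (fun ω => c 0 ω ^ (-(min a0 ainf))) P) :
    ∀ b : ℝ, 0 < b → ∀ dd : ℝ, 0 < dd →
      Tendsto (fun t : ℝ =>
          (P ({ω | c (-1) ω ≤ b ∨ 1 / c 0 ω ≤ dd} ∩ {ω | t < rho lam c 0 ω})).toReal /
            (P {ω | t < rho lam c 0 ω}).toReal)
        atTop (nhds 0) := by
  intro b hb dd hdd
  set α := min a0 ainf with hα
  have hαpos : 0 < α := lt_min ha0 hainf
  set U1 : Ω → ℝ := fun ω => (c 0 ω)⁻¹ with hU1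
  have hU1m : Measurable U1 := (hmeas 0).inv
  have hU1pos : ∀ ω, 0 < U1 ω := fun ω => inv_pos.mpr (hpos 0 ω)
  have hind1 : IndepFun (c (-1)) U1 P := by
    have h01 : IndepFun (c (-1)) (c 0) P := hindep.indepFun (by decide)
    exact h01.comp measurable_id measurable_inv
  -- tail of U1
  have hT1 : ∀ s : ℝ, 1 < s → (P {ω | s < U1 ω}).toReal = L0 s * s ^ (-a0) := by
    intro s hs
    have hs0 : 0 < s := lt_trans one_pos hs
    have hset : {ω | s < U1 ω} = {ω | c 0 ω < 1 / s} := by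
      ext ω
      simp only [Set.mem_setOf_eq, hU1, one_div]
      exact lt_inv_comm₀ hs0 (hpos 0 ω)
    rw [hset, htail0 (1/s) (by positivity) ((div_lt_one hs0).mpr hs)]
    rw [one_div_one_div, one_div, Real.inv_rpow hs0.le, ← Real.rpow_neg hs0.le]
  -- tail of c (-1)
  have hT2 : ∀ s : ℝ, 1 < s → (P {ω | s < c (-1) ω}).toReal = Linf s * s ^ (-ainf) := by
    intro s hs
    have : P {ω | s < c (-1) ω} = P {ω | s < c 0 ω} :=
      (hident (-1)).measure_mem_eq measurableSet_Ioi
    rw [this, htailinf s hs]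
  -- moments
  have hmom1 : ∀ C : ℝ, ∃ N : ℕ, C < ∑ j ∈ Finset.range N,
      (P ((c (-1)) ⁻¹' Set.Ico ((2:ℝ)^j) ((2:ℝ)^(j+1)))).toReal * ((2:ℝ)^j) ^ a0 := by
    have hid : IdentDistrib (fun ω => c (-1) ω ^ α) (fun ω => c 0 ω ^ α) P P :=
      (hident (-1)).comp (measurable_id.pow measurable_const)
    have hint1 : ¬ Integrable (fun ω => c (-1) ω ^ α) P :=
      fun h => hwawPos (hid.integrable_iff.mp h)
    exact moment_div P (c (-1)) (hmeas (-1)) (hpos (-1)) hαpos (min_le_left _ _) hint1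
  have hmom2 : ∀ C : ℝ, ∃ N : ℕ, C < ∑ j ∈ Finset.range N,
      (P (U1 ⁻¹' Set.Ico ((2:ℝ)^j) ((2:ℝ)^(j+1)))).toReal * ((2:ℝ)^j) ^ ainf := by
    have hfun : (fun ω => U1 ω ^ α) = (fun ω => c 0 ω ^ (-α)) := funext fun ω => by
      rw [hU1]
      simp only
      rw [Real.inv_rpow (hpos 0 ω).le, ← Real.rpow_neg (hpos 0 ω).le]
    have hint2 : ¬ Integrable (fun ω => U1 ω ^ α) P := by
      rw [hfun]; exact hwawNeg
    exact moment_div P U1 hU1m hU1pos hαpos (min_le_right _ _) hint2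
  have h1 := one_sided P U1 (c (-1)) hU1m (hmeas (-1)) hU1pos hind1 ha0 hsv0 hT1 hmom1 hb
  have h2 := one_sided P (c (-1)) U1 (hmeas (-1)) hU1m (fun ω => hpos (-1) ω) hind1.symm
    hainf hsvinf hT2 hmom2 hdd
  have hswap : ∀ s : ℝ, {ω | s < U1 ω * c (-1) ω} = {ω | s < c (-1) ω * U1 ω} := by
    intro s; ext ω; simp only [Set.mem_setOf_eq]; rw [mul_comm]
  simp only [hswap] at h2
  have hcomp : Tendsto (fun t : ℝ => t * Real.exp lam) atTop atTop :=
    tendsto_id.atTop_mul_const (Real.exp_pos lam)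
  have h1' := h1.comp hcomp
  have h2' := h2.comp hcomp
  -- rewrite the conditioning event
  have hden_eq : ∀ t : ℝ, {ω | t < rho lam c 0 ω}
      = {ω | t * Real.exp lam < c (-1) ω * U1 ω} := by
    intro t
    ext ω
    have hidx : (0:ℤ) - 1 = -1 := by norm_num
    simp only [rho, hidx, Set.mem_setOf_eq, hU1]
    have hc0 : 0 < c 0 ω := hpos 0 ω
    have hexp : 0 < Real.exp lam := Real.exp_pos lam
    rw [Real.exp_neg]
    have hre : (Real.exp lam)⁻¹ * c (-1) ω / c 0 ω
        = (c (-1) ω * (c 0 ω)⁻¹) / Real.exp lam := by ring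
    rw [hre, lt_div_iff₀ hexp]
  simp only [hden_eq]
  -- squeeze
  apply squeeze_zero (g := fun t =>
      ((fun s => (P {ω | s / b < U1 ω}).toReal /
          (P {ω | s < c (-1) ω * U1 ω}).toReal) ∘ fun t : ℝ => t * Real.exp lam) t
      + ((fun s => (P {ω | s / dd < c (-1) ω}).toReal /
          (P {ω | s < c (-1) ω * U1 ω}).toReal) ∘ fun t : ℝ => t * Real.exp lam) t)
  · intro t
    exact div_nonneg ENNReal.toReal_nonneg ENNReal.toReal_nonneg
  · intro t
    simp only [Function.comp_apply]
    set s := t * Real.exp lam with hs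
    set D := (P {ω | s < c (-1) ω * U1 ω}).toReal with hD
    have hDnn : 0 ≤ D := ENNReal.toReal_nonneg
    rcases eq_or_lt_of_le hDnn with h0 | hDpos
    · rw [← h0]
      simp [div_zero]
    · have hsub : {ω | c (-1) ω ≤ b ∨ 1 / c 0 ω ≤ dd} ∩ {ω | s < c (-1) ω * U1 ω}
          ⊆ {ω | s / b < U1 ω} ∪ {ω | s / dd < c (-1) ω} := by
        rintro ω ⟨hA, hDen⟩
        simp only [Set.mem_setOf_eq] at hDen
        rcases hA with hc | hd
        · left
          simp only [Set.mem_setOf_eq]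
          rw [div_lt_iff₀ hb]
          calc s < c (-1) ω * U1 ω := hDen
            _ ≤ b * U1 ω := mul_le_mul_of_nonneg_right hc (hU1pos ω).le
            _ = U1 ω * b := mul_comm _ _
        · right
          simp only [Set.mem_setOf_eq]
          rw [div_lt_iff₀ hdd]
          have hd' : U1 ω ≤ dd := by
            show (c 0 ω)⁻¹ ≤ dd
            rwa [one_div] at hd
          calc s < c (-1) ω * U1 ω := hDen
            _ ≤ c (-1) ω * dd := mul_le_mul_of_nonneg_left hd' (hpos (-1) ω).le
      have hnum : (P ({ω | c (-1) ω ≤ b ∨ 1 / c 0 ω ≤ dd}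
            ∩ {ω | s < c (-1) ω * U1 ω})).toReal
          ≤ (P {ω | s / b < U1 ω}).toReal + (P {ω | s / dd < c (-1) ω}).toReal := by
        rw [← ENNReal.toReal_add (measure_ne_top P _) (measure_ne_top P _)]
        refine ENNReal.toReal_mono (ENNReal.add_ne_top.mpr
          ⟨measure_ne_top P _, measure_ne_top P _⟩) ?_
        calc P ({ω | c (-1) ω ≤ b ∨ 1 / c 0 ω ≤ dd} ∩ {ω | s < c (-1) ω * U1 ω})
            ≤ P ({ω | s / b < U1 ω} ∪ {ω | s / dd < c (-1) ω}) := measure_mono hsub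
          _ ≤ _ := measure_union_le _ _
      calc (P ({ω | c (-1) ω ≤ b ∨ 1 / c 0 ω ≤ dd}
            ∩ {ω | s < c (-1) ω * U1 ω})).toReal / D
          ≤ ((P {ω | s / b < U1 ω}).toReal + (P {ω | s / dd < c (-1) ω}).toReal) / D := by
            exact div_le_div_of_nonneg_right hnum hDnn
        _ = (P {ω | s / b < U1 ω}).toReal / D + (P {ω | s / dd < c (-1) ω}).toReal / D :=
            add_div _ _ _
  · simpa using h1'.add h2'
end

section
/- Assume that for some α ∈ (0,1] the function t ↦ ℙ(ρ_0 > t)·t^{α} is slowly varying on (0,∞). Then there exists a constant c > 0 such that for every integer k ≥ 0 and every t > 1, ℙ(ρ_0^{(k)} > t) ≤ c·e^{-λαk/2}·ℙ(ρ_0 > t). -/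
open MeasureTheory ProbabilityTheory Filter Real

variable {Ω : Type*}

theorem statement6
    {Ω : Type*} [MeasurableSpace Ω] (P : Measure Ω) [IsProbabilityMeasure P]
    (c : ℤ → Ω → ℝ) (lam : ℝ) (hlam : 0 < lam)
    (hmeas : ∀ x, Measurable (c x)) (hpos : ∀ x ω, 0 < c x ω)
    (hindep : iIndepFun c P)
    (hident : ∀ x, IdentDistrib (c x) (c 0) P P)
    (alpha : ℝ) (halpha_pos : 0 < alpha) (halpha_le : alpha ≤ 1)
    (hsv : SlowlyVarying (fun t => (P {ω | t < rho lam c 0 ω}).toReal * t ^ alpha)) :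
    ∃ C : ℝ, 0 < C ∧ ∀ k : ℕ, ∀ t : ℝ, 1 < t →
      (P {ω | t < rhoK lam c 0 k ω}).toReal ≤
        C * Real.exp (-lam * alpha * (k : ℝ) / 2) * (P {ω | t < rho lam c 0 ω}).toReal := by
  classical
  set F : ℝ → ℝ := fun t => (P {ω | t < rho lam c 0 ω}).toReal with hFdef
  -- positivity of F on (0,∞)
  have hFnonneg : ∀ t : ℝ, 0 ≤ F t := fun t => ENNReal.toReal_nonneg
  have hFpos : ∀ t : ℝ, 0 < t → 0 < F t := by
    intro t ht
    have h := hsv.2.1 t ht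
    have htα : 0 < t ^ alpha := Real.rpow_pos_of_pos ht alpha
    have h' : 0 < F t * t ^ alpha := h
    by_contra hc
    push_neg at hc
    nlinarith [h', htα, hc]
  -- monotonicity (nonincreasing)
  have hFmono : ∀ s s' : ℝ, s ≤ s' → F s' ≤ F s := by
    intro s s' h
    refine ENNReal.toReal_mono (measure_ne_top P _) ?_
    exact measure_mono fun ω hω => lt_of_le_of_lt h hω
  -- distributional identity: P(ρ^{(k)} > t) = F(e^{λk} t)
  have hdist : ∀ k : ℕ, ∀ t : ℝ,
      (P {ω | t < rhoK lam c 0 k ω}).toReal = F (Real.exp (lam * k) * t) := by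
    intro k t
    set s : ℝ := Real.exp (lam * k) * t with hs
    set S : Set (ℝ × ℝ) := {p : ℝ × ℝ | s < Real.exp (-lam) * p.1 / p.2} with hS
    have hSmeas : MeasurableSet S :=
      measurableSet_lt measurable_const
        ((measurable_const.mul measurable_fst).div measurable_snd)
    have hset : {ω | t < rhoK lam c 0 k ω}
        = (fun ω => (c (0 - 1) ω, c (0 + (k : ℤ)) ω)) ⁻¹' S := by
      ext ω
      simp only [Set.mem_setOf_eq, Set.mem_preimage, rhoK, hS]
      have hb : c (0 + (k : ℤ)) ω ≠ 0 := (hpos _ ω).ne'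
      have e1 : Real.exp (-lam * ((k : ℝ) + 1)) * Real.exp (lam * k) = Real.exp (-lam) := by
        rw [← Real.exp_add]; ring_nf
      have key : Real.exp (-lam * ((k : ℝ) + 1)) * c (0 - 1) ω / c (0 + (k : ℤ)) ω
          = (Real.exp (-lam) * c (0 - 1) ω / c (0 + (k : ℤ)) ω) / Real.exp (lam * k) := by
        have e2 : Real.exp (-lam * ((k : ℝ) + 1)) = Real.exp (-lam) / Real.exp (lam * k) := by
          rw [eq_div_iff (Real.exp_pos (lam * k)).ne']; exact e1
        rw [e2]; ring
      rw [key, lt_div_iff₀ (Real.exp_pos (lam * k)), hs, mul_comm t (Real.exp (lam * k))]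
    have hset0 : {ω | s < rho lam c 0 ω}
        = (fun ω => (c (0 - 1) ω, c (0 : ℤ) ω)) ⁻¹' S := by
      ext ω
      simp only [Set.mem_setOf_eq, Set.mem_preimage, rho, hS]
    have hmp : ∀ j : ℤ, (0 - 1 : ℤ) ≠ j →
        P ((fun ω => (c (0 - 1) ω, c j ω)) ⁻¹' S)
          = ((P.map (c (0 - 1))).prod (P.map (c j))) S := by
      intro j hj
      have hind : IndepFun (c (0 - 1)) (c j) P := hindep.indepFun hj
      have hmap := (indepFun_iff_map_prod_eq_prod_map_map
        (hmeas _).aemeasurable (hmeas _).aemeasurable).mp hind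
      rw [← Measure.map_apply ((hmeas _).prodMk (hmeas _)) hSmeas, hmap]
    have h1 : P {ω | t < rhoK lam c 0 k ω}
        = ((P.map (c (0 - 1))).prod (P.map (c (0 + (k : ℤ))))) S := by
      rw [hset, hmp _ (by omega)]
    have h2 : P {ω | s < rho lam c 0 ω}
        = ((P.map (c (0 - 1))).prod (P.map (c (0 : ℤ)))) S := by
      rw [hset0, hmp _ (by omega)]
    have hmapeq : P.map (c (0 + (k : ℤ))) = P.map (c (0 : ℤ)) := by
      rw [(hident (0 + (k : ℤ))).map_eq]
    rw [show F (Real.exp (lam * k) * t) = (P {ω | s < rho lam c 0 ω}).toReal from rfl,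
      h1, h2, hmapeq]
  -- one-step contraction eventually
  obtain ⟨T, hT1, hTstep⟩ : ∃ T : ℝ, 1 ≤ T ∧ ∀ s, T ≤ s →
      F (Real.exp lam * s) ≤ Real.exp (-(lam * alpha) / 2) * F s := by
    have htend := hsv.2.2 (Real.exp lam) (Real.exp_pos lam)
    have hlt : (1 : ℝ) < Real.exp (lam * alpha / 2) := by
      rw [show (1 : ℝ) = Real.exp 0 from (Real.exp_zero).symm]
      exact Real.exp_lt_exp.mpr (by positivity)
    have hev := htend.eventually_lt_const hlt
    rw [eventually_atTop] at hev
    obtain ⟨T₀, hT₀⟩ := hev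
    refine ⟨max T₀ 1, le_max_right _ _, ?_⟩
    intro u hu
    have hu1 : (1 : ℝ) ≤ u := le_trans (le_max_right T₀ 1) hu
    have hu0 : 0 < u := lt_of_lt_of_le one_pos hu1
    have hL := hT₀ u (le_trans (le_max_left T₀ 1) hu)
    simp only at hL
    have hLu : 0 < F u * u ^ alpha := hsv.2.1 u hu0
    have hLlt : F (Real.exp lam * u) * (Real.exp lam * u) ^ alpha
        < Real.exp (lam * alpha / 2) * (F u * u ^ alpha) := by
      have := (div_lt_iff₀ hLu).mp hL
      linarith [this]
    have hrpow : (Real.exp lam * u) ^ alpha = Real.exp (lam * alpha) * u ^ alpha := by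
      rw [Real.mul_rpow (Real.exp_pos lam).le hu0.le,
        Real.rpow_def_of_pos (Real.exp_pos lam), Real.log_exp]
    rw [hrpow] at hLlt
    have huα : 0 < u ^ alpha := Real.rpow_pos_of_pos hu0 alpha
    have h1 : F (Real.exp lam * u) * Real.exp (lam * alpha)
        ≤ Real.exp (lam * alpha / 2) * F u := by
      have := hLlt
      nlinarith [huα]
    have hE : Real.exp (-(lam * alpha) / 2) * Real.exp (lam * alpha)
        = Real.exp (lam * alpha / 2) := by
      rw [← Real.exp_add]; ring_nf
    have h2 : F (Real.exp lam * u) * Real.exp (lam * alpha)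
        ≤ (Real.exp (-(lam * alpha) / 2) * F u) * Real.exp (lam * alpha) := by
      calc F (Real.exp lam * u) * Real.exp (lam * alpha)
          ≤ Real.exp (lam * alpha / 2) * F u := h1
        _ = (Real.exp (-(lam * alpha) / 2) * F u) * Real.exp (lam * alpha) := by
            rw [← hE]; ring
    exact le_of_mul_le_mul_right h2 (Real.exp_pos _)
  -- iterated contraction above T
  have hiter : ∀ j : ℕ, ∀ u : ℝ, T ≤ u →
      F (Real.exp (lam * j) * u) ≤ Real.exp (-(lam * alpha * j) / 2) * F u := by
    intro j
    induction j with
    | zero => intro u hu; simp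
    | succ n ih =>
      intro u hu
      have hu0 : 0 < u := lt_of_lt_of_le one_pos (le_trans hT1 hu)
      have h1 : Real.exp (lam * ((n : ℝ) + 1)) * u
          = Real.exp lam * (Real.exp (lam * n) * u) := by
        rw [← mul_assoc, ← Real.exp_add]; ring_nf
      have h2 : T ≤ Real.exp (lam * n) * u := by
        have hone : (1 : ℝ) ≤ Real.exp (lam * n) :=
          Real.one_le_exp (by positivity)
        nlinarith [hu, hu0]
      calc F (Real.exp (lam * (n + 1 : ℕ)) * u)
          = F (Real.exp lam * (Real.exp (lam * n) * u)) := by push_cast; rw [h1]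
        _ ≤ Real.exp (-(lam * alpha) / 2) * F (Real.exp (lam * n) * u) := hTstep _ h2
        _ ≤ Real.exp (-(lam * alpha) / 2) * (Real.exp (-(lam * alpha * n) / 2) * F u) :=
            mul_le_mul_of_nonneg_left (ih u hu) (Real.exp_pos _).le
        _ = Real.exp (-(lam * alpha * (n + 1 : ℕ)) / 2) * F u := by
            rw [← mul_assoc, ← Real.exp_add]; push_cast; ring_nf
  -- choose m with exp(lam*m) ≥ T
  obtain ⟨m, hm⟩ : ∃ m : ℕ, Real.log T / lam ≤ m := exists_nat_ge _
  have hTm : T ≤ Real.exp (lam * m) := by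
    have : Real.log T ≤ lam * m := by
      rw [div_le_iff₀ hlam] at hm; linarith [hm]
    calc T = Real.exp (Real.log T) := (Real.exp_log (lt_of_lt_of_le one_pos hT1)).symm
      _ ≤ Real.exp (lam * m) := Real.exp_le_exp.mpr this
  refine ⟨Real.exp (lam * alpha * m / 2), Real.exp_pos _, ?_⟩
  intro k t ht
  rw [hdist k t]
  have ht0 : 0 < t := lt_trans one_pos ht
  have hkey : F (Real.exp (lam * k) * t)
      ≤ Real.exp (lam * alpha * m / 2) * Real.exp (-lam * alpha * k / 2) * F t := by
    rcases le_or_gt k m with hkm | hmk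
    · -- k ≤ m : use monotonicity
      have h1 : t ≤ Real.exp (lam * k) * t := by
        nlinarith [Real.one_le_exp (by positivity : (0:ℝ) ≤ lam * k), ht0]
      have h2 : F (Real.exp (lam * k) * t) ≤ F t := hFmono _ _ h1
      have h3 : (1 : ℝ) ≤ Real.exp (lam * alpha * m / 2) * Real.exp (-lam * alpha * k / 2) := by
        rw [← Real.exp_add]
        refine Real.one_le_exp ?_
        have : (k : ℝ) ≤ (m : ℝ) := Nat.cast_le.mpr hkm
        nlinarith [mul_pos hlam halpha_pos]
      nlinarith [hFnonneg t, h2, h3]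
    · -- k > m : split
      have hmk' : m ≤ k := hmk.le
      set j : ℕ := k - m with hj
      have hkj : k = m + j := by omega
      have hsplit : Real.exp (lam * k) * t
          = Real.exp (lam * j) * (Real.exp (lam * m) * t) := by
        rw [← mul_assoc, ← Real.exp_add, hkj]; push_cast; ring_nf
      have hTt : T ≤ Real.exp (lam * m) * t := by
        nlinarith [hTm, Real.exp_pos (lam * m), ht]
      have h1 : F (Real.exp (lam * j) * (Real.exp (lam * m) * t))
          ≤ Real.exp (-(lam * alpha * j) / 2) * F (Real.exp (lam * m) * t) :=
        hiter j _ hTt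
      have h2 : F (Real.exp (lam * m) * t) ≤ F t := by
        refine hFmono _ _ ?_
        nlinarith [Real.one_le_exp (by positivity : (0:ℝ) ≤ lam * m), ht0]
      have h3 : Real.exp (-(lam * alpha * j) / 2)
          = Real.exp (lam * alpha * m / 2) * Real.exp (-lam * alpha * k / 2) := by
        rw [← Real.exp_add, hkj]; push_cast; ring_nf
      calc F (Real.exp (lam * k) * t)
          = F (Real.exp (lam * j) * (Real.exp (lam * m) * t)) := by rw [hsplit]
        _ ≤ Real.exp (-(lam * alpha * j) / 2) * F (Real.exp (lam * m) * t) := h1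
        _ ≤ Real.exp (-(lam * alpha * j) / 2) * F t :=
            mul_le_mul_of_nonneg_left h2 (Real.exp_pos _).le
        _ = Real.exp (lam * alpha * m / 2) * Real.exp (-lam * alpha * k / 2) * F t := by
            rw [h3]
  exact hkey
end

section
/- Assume Assumption (Traps). Define V := Σ_{j≥1} (1/c_j)·e^{-λ(j+1)} and W := Σ_{j≥2} c_{-j}·e^{-λ(j+1)}. Then V and W are almost surely finite, and there exists a constant c > 0 such that for all t > 1: ℙ(V > t) ≤ c·ℙ(1/c_0 > t) and ℙ(W > t) ≤ c·ℙ(c_0 > t). -/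
open MeasureTheory ProbabilityTheory Filter Real

variable {Ω : Type*}

section Aux
open MeasureTheory Filter

/-- Ratio step for regularly varying tails. -/
lemma tail_ratio (F G : ℝ → ℝ) (α : ℝ)
    (hFeq : ∀ s, 1 < s → F s = G s * s ^ (-α))
    (hGpos : ∀ s, 0 < s → 0 < G s)
    (hGsv : ∀ b : ℝ, 0 < b → Tendsto (fun t => G (b * t) / G t) atTop (nhds 1))
    (b q : ℝ) (hb : 0 < b) (hq : b ^ (-α) < q) :
    ∃ s0 : ℝ, 1 < s0 ∧ ∀ s, s0 ≤ s → F (b * s) ≤ q * F s := by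
  have h1 : Tendsto (fun t => G (b * t) / G t * b ^ (-α)) atTop (nhds (b ^ (-α))) := by
    simpa using (hGsv b hb).mul_const (b ^ (-α))
  have h2 : ∀ᶠ t in atTop, G (b * t) / G t * b ^ (-α) < q := h1.eventually_lt_const hq
  have h3 : ∀ᶠ t : ℝ in atTop, 1 < t ∧ 1 < b * t := by
    filter_upwards [eventually_gt_atTop (max 1 (2 / b))] with t ht
    have ht1 : 1 < t := lt_of_le_of_lt (le_max_left _ _) ht
    have ht2 : 2 / b < t := lt_of_le_of_lt (le_max_right _ _) ht
    refine ⟨ht1, ?_⟩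
    have : 2 < b * t := by rwa [div_lt_iff₀ hb, mul_comm] at ht2
    linarith
  obtain ⟨s0, hs0⟩ := eventually_atTop.mp (h2.and h3)
  refine ⟨max s0 2, by norm_num, fun s hs => ?_⟩
  obtain ⟨hr, hs1, hbs1⟩ := hs0 s (le_trans (le_max_left _ _) hs)
  have hspos : (0:ℝ) < s := lt_trans one_pos hs1
  have hGs : 0 < G s := hGpos s hspos
  have hFs : F s = G s * s ^ (-α) := hFeq s hs1
  have hFbs : F (b * s) = G (b * s) * (b * s) ^ (-α) := hFeq _ hbs1
  have hmul : (b * s) ^ (-α) = b ^ (-α) * s ^ (-α) := Real.mul_rpow hb.le hspos.le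
  have hFsp : 0 < F s := by
    rw [hFs]; positivity
  calc F (b * s) = (G (b * s) / G s * b ^ (-α)) * F s := by
        rw [hFbs, hFs, hmul]; field_simp
    _ ≤ q * F s := by
        apply mul_le_mul_of_nonneg_right hr.le hFsp.le

/-- Main geometric tail-domination lemma. -/
lemma tail_main (F G : ℝ → ℝ) (α : ℝ) (hα : 0 < α)
    (hF1 : ∀ s, F s ≤ 1) (hanti : Antitone F)
    (hFeq : ∀ s, 1 < s → F s = G s * s ^ (-α))
    (hGpos : ∀ s, 0 < s → 0 < G s)
    (hGsv : ∀ b : ℝ, 0 < b → Tendsto (fun t => G (b * t) / G t) atTop (nhds 1))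
    (a K : ℝ) (ha : 1 < a) (hK : 0 < K) :
    ∃ B θ : ℝ, 0 < B ∧ 0 < θ ∧ θ < 1 ∧
      ∀ t, 1 < t → ∀ j : ℕ, F (K * a ^ j * t) ≤ (B * F t) * θ ^ j := by
  have hF0 : ∀ s, 0 ≤ F s := by
    intro s
    have h2 : F (max s 2) ≤ F s := hanti (le_max_left _ _)
    have h1 : (1:ℝ) < max s 2 := by
      have : (1:ℝ) < 2 := one_lt_two
      exact lt_of_lt_of_le this (le_max_right _ _)
    have := hFeq _ h1
    have hp : 0 < G (max s 2) * (max s 2) ^ (-α) := by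
      have := hGpos (max s 2) (lt_trans one_pos h1); positivity
    linarith [this ▸ hp, h2]
  have hFpos : ∀ s, 1 < s → 0 < F s := by
    intro s hs
    rw [hFeq s hs]
    have := hGpos s (lt_trans one_pos hs); positivity
  -- θ
  have haα : a ^ (-α) < 1 := Real.rpow_lt_one_of_one_lt_of_neg ha (by linarith)
  have haαpos : (0:ℝ) < a ^ (-α) := Real.rpow_pos_of_pos (by linarith) _
  set θ : ℝ := (1 + a ^ (-α)) / 2 with hθdef
  have hθ1 : θ < 1 := by rw [hθdef]; linarith
  have hθ0 : 0 < θ := by rw [hθdef]; linarith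
  have haθ : a ^ (-α) < θ := by rw [hθdef]; linarith
  obtain ⟨s0, hs01, hgeo⟩ := tail_ratio F G α hFeq hGpos hGsv a θ (by linarith) haθ
  -- iteration
  have hiter : ∀ s, s0 ≤ s → ∀ j : ℕ, F (a ^ j * s) ≤ θ ^ j * F s := by
    intro s hs j
    induction j with
    | zero => simp
    | succ n ih =>
      have hs0pos : (0:ℝ) < s := lt_trans one_pos (lt_of_lt_of_le hs01 hs)
      have hsge : s0 ≤ a ^ n * s := le_trans hs (by
        nlinarith [one_le_pow₀ ha.le (n := n), hs0pos])
      calc F (a ^ (n+1) * s) = F (a * (a ^ n * s)) := by ring_nf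
        _ ≤ θ * F (a ^ n * s) := hgeo _ hsge
        _ ≤ θ * (θ ^ n * F s) := mul_le_mul_of_nonneg_left ih hθ0.le
        _ = θ ^ (n+1) * F s := by ring
  -- scale constant
  obtain ⟨s1, hs11, hscale⟩ := tail_ratio F G α hFeq hGpos hGsv K (K ^ (-α) + 1) hK
    (lt_add_one _)
  set B1 : ℝ := K ^ (-α) + 1 with hB1def
  have hB1pos : 0 < B1 := by
    have : (0:ℝ) < K ^ (-α) := Real.rpow_pos_of_pos hK _
    rw [hB1def]; linarith
  -- j0
  obtain ⟨j0, hj0⟩ := (tendsto_pow_atTop_atTop_of_one_lt ha).eventually_ge_atTop (s0 / K)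
    |>.exists
  have hKj0 : s0 ≤ K * a ^ j0 := by
    rw [div_le_iff₀ hK] at hj0; linarith [hj0]
  set T : ℝ := max (max s1 (s0 / K)) 2 with hTdef
  have hT1 : (1:ℝ) < T := lt_of_lt_of_le one_lt_two (le_max_right _ _)
  have hTs1 : s1 ≤ T := le_trans (le_max_left _ _) (le_max_left _ _)
  have hKT : s0 ≤ K * T := by
    have : s0 / K ≤ T := le_trans (le_max_right _ _) (le_max_left _ _)
    rw [div_le_iff₀ hK] at this; linarith
  have hFT : 0 < F T := hFpos T hT1
  set B2 : ℝ := (θ ^ j0)⁻¹ / F T with hB2def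
  have hB2pos : 0 < B2 := by rw [hB2def]; positivity
  refine ⟨max B1 B2, θ, lt_of_lt_of_le hB1pos (le_max_left _ _), hθ0, hθ1, ?_⟩
  intro t ht j
  have htpos : (0:ℝ) < t := lt_trans one_pos ht
  have hapow : (0:ℝ) < a ^ j := pow_pos (by linarith) j
  rcases le_total T t with hTt | htT
  · -- large t
    have hKt : s0 ≤ K * t := le_trans hKT (by nlinarith)
    have h1 : F (K * a ^ j * t) ≤ θ ^ j * F (K * t) := by
      have := hiter (K * t) hKt j
      calc F (K * a ^ j * t) = F (a ^ j * (K * t)) := by ring_nf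
        _ ≤ θ ^ j * F (K * t) := this
    have h2 : F (K * t) ≤ B1 * F t := hscale t (le_trans hTs1 hTt)
    calc F (K * a ^ j * t) ≤ θ ^ j * (B1 * F t) := le_trans h1
          (mul_le_mul_of_nonneg_left h2 (pow_nonneg hθ0.le j))
      _ = (B1 * F t) * θ ^ j := by ring
      _ ≤ (max B1 B2 * F t) * θ ^ j :=
          mul_le_mul_of_nonneg_right
            (mul_le_mul_of_nonneg_right (le_max_left _ _) (hF0 t))
            (pow_nonneg hθ0.le j)
  · -- small t
    have hmono : F (K * a ^ j * t) ≤ F (K * a ^ j) := by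
      apply hanti; nlinarith [mul_pos hK hapow]
    have hclaim : F (K * a ^ j) * θ ^ j0 ≤ θ ^ j := by
      rcases le_total j0 j with hle | hle
      · obtain ⟨m, rfl⟩ := Nat.exists_eq_add_of_le hle
        have : F (a ^ m * (K * a ^ j0)) ≤ θ ^ m * F (K * a ^ j0) := hiter _ hKj0 m
        have heq : K * a ^ (j0 + m) = a ^ m * (K * a ^ j0) := by ring
        rw [heq]
        have hFb : F (K * a ^ j0) ≤ 1 := hF1 _
        have hθm : (0:ℝ) ≤ θ ^ m := pow_nonneg hθ0.le m
        have hθj0 : (0:ℝ) ≤ θ ^ j0 := pow_nonneg hθ0.le j0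
        calc F (a ^ m * (K * a ^ j0)) * θ ^ j0 ≤ (θ ^ m * F (K * a ^ j0)) * θ ^ j0 :=
              mul_le_mul_of_nonneg_right this hθj0
          _ ≤ (θ ^ m * 1) * θ ^ j0 :=
              mul_le_mul_of_nonneg_right (mul_le_mul_of_nonneg_left hFb hθm) hθj0
          _ = θ ^ (j0 + m) := by ring
      · have h1 : F (K * a ^ j) * θ ^ j0 ≤ 1 * θ ^ j0 :=
          mul_le_mul_of_nonneg_right (hF1 _) (pow_nonneg hθ0.le j0)
        rw [one_mul] at h1
        exact le_trans h1 (pow_le_pow_of_le_one hθ0.le hθ1.le hle)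
    have hFtT : F T ≤ F t := hanti htT
    have hθj0pos : (0:ℝ) < θ ^ j0 := pow_pos hθ0 j0
    have key : F (K * a ^ j * t) ≤ (B2 * F t) * θ ^ j := by
      have h1 : F (K * a ^ j * t) ≤ θ ^ j / θ ^ j0 := by
        rw [le_div_iff₀ hθj0pos]
        exact le_trans (mul_le_mul_of_nonneg_right hmono hθj0pos.le) hclaim
      have hge1 : (1:ℝ) ≤ F t / F T := (one_le_div hFT).mpr hFtT
      have hqpos : (0:ℝ) ≤ θ ^ j / θ ^ j0 := by positivity
      have h2 : θ ^ j / θ ^ j0 ≤ (B2 * F t) * θ ^ j := by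
        calc θ ^ j / θ ^ j0 = 1 * (θ ^ j / θ ^ j0) := (one_mul _).symm
          _ ≤ (F t / F T) * (θ ^ j / θ ^ j0) := mul_le_mul_of_nonneg_right hge1 hqpos
          _ = (B2 * F t) * θ ^ j := by
              rw [hB2def]; field_simp
      exact le_trans h1 h2
    calc F (K * a ^ j * t) ≤ (B2 * F t) * θ ^ j := key
      _ ≤ (max B1 B2 * F t) * θ ^ j :=
          mul_le_mul_of_nonneg_right
            (mul_le_mul_of_nonneg_right (le_max_right _ _) (hF0 t))
            (pow_nonneg hθ0.le j)
set_option maxHeartbeats 1000000 in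
open MeasureTheory Filter in
lemma master {Ω : Type*} [MeasurableSpace Ω] (P : Measure Ω) [IsProbabilityMeasure P]
    (X : ℕ → Ω → ℝ) (X0 : Ω → ℝ)
    (hid : ∀ (j : ℕ) (s : ℝ), P {ω | s < X j ω} = P {ω | s < X0 ω})
    (hXpos : ∀ j ω, 0 ≤ X j ω)
    (G : ℝ → ℝ) (α : ℝ) (hα : 0 < α)
    (hGpos : ∀ s, 0 < s → 0 < G s)
    (hGsv : ∀ b : ℝ, 0 < b → Tendsto (fun t => G (b * t) / G t) atTop (nhds 1))
    (htail : ∀ s : ℝ, 1 < s → (P {ω | s < X0 ω}).toReal = G s * s ^ (-α))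
    (lam d : ℝ) (hlam : 0 < lam) (hd : 0 ≤ d) :
    (∀ᵐ ω ∂P, Summable (fun j : ℕ => X j ω * Real.exp (-lam * ((j : ℝ) + d)))) ∧
    ∃ C : ℝ, 0 < C ∧ ∀ t : ℝ, 1 < t →
      (P {ω | t < ∑' j : ℕ, X j ω * Real.exp (-lam * ((j : ℝ) + d))}).toReal
        ≤ C * (P {ω | t < X0 ω}).toReal := by
  classical
  set F : ℝ → ℝ := fun s => (P {ω | s < X0 ω}).toReal with hFdef
  have hFeq : ∀ s : ℝ, 1 < s → F s = G s * s ^ (-α) := htail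
  have hF1 : ∀ s, F s ≤ 1 := by
    intro s
    refine ENNReal.toReal_le_of_le_ofReal zero_le_one ?_
    simpa using prob_le_one (μ := P) (s := {ω | s < X0 ω})
  have hanti : Antitone F := by
    intro s s' h
    exact ENNReal.toReal_mono (measure_ne_top _ _)
      (measure_mono (fun ω hω => lt_of_le_of_lt h hω))
  have hF0 : ∀ s, 0 ≤ F s := fun s => ENNReal.toReal_nonneg
  -- constants
  set r : ℝ := Real.exp (-(lam / 2)) with hrdef
  have hr0 : 0 < r := Real.exp_pos _
  have hr1 : r < 1 := Real.exp_lt_one_iff.mpr (by linarith)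
  set a : ℝ := Real.exp (lam / 2) with hadef
  have ha : 1 < a := Real.one_lt_exp_iff.mpr (by linarith)
  set K : ℝ := (1 - r) * Real.exp (lam * d) with hKdef
  have hK : 0 < K := by
    have := Real.exp_pos (lam * d); rw [hKdef]; nlinarith
  -- key exponential identity
  have hkey : ∀ p : ℕ, a ^ p * Real.exp (-lam * ((p : ℝ) + d))
      = Real.exp (-(lam * d)) * r ^ p := by
    intro p
    rw [hadef, hrdef, ← Real.exp_nat_mul, ← Real.exp_nat_mul, ← Real.exp_add, ← Real.exp_add]
    congr 1; ring
  obtain ⟨B, θ, hB, hθ0, hθ1, hbound⟩ :=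
    tail_main F G α hα hF1 hanti hFeq hGpos hGsv a K ha hK
  obtain ⟨B', θ', hB', hθ'0, hθ'1, hbound'⟩ :=
    tail_main F G α hα hF1 hanti hFeq hGpos hGsv a 1 ha one_pos
  constructor
  · -- a.s. summability
    set A : ℕ → Set Ω := fun j => {ω | 1 * a ^ j * 2 < X j ω} with hAdef
    have hAle : ∀ j, P (A j) ≤ ENNReal.ofReal ((B' * F 2) * θ' ^ j) := by
      intro j
      have h1 : P (A j) = P {ω | 1 * a ^ j * 2 < X0 ω} := hid j _
      have h2 : (P {ω | 1 * a ^ j * 2 < X0 ω}).toReal ≤ (B' * F 2) * θ' ^ j :=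
        hbound' 2 one_lt_two j
      calc P (A j) = ENNReal.ofReal ((P {ω | 1 * a ^ j * 2 < X0 ω}).toReal) := by
            rw [ENNReal.ofReal_toReal (measure_ne_top _ _), h1]
        _ ≤ ENNReal.ofReal ((B' * F 2) * θ' ^ j) := ENNReal.ofReal_le_ofReal h2
    have hsummable : Summable (fun j : ℕ => (B' * F 2) * θ' ^ j) :=
      (summable_geometric_of_lt_one hθ'0.le hθ'1).mul_left _
    have hsumA : ∑' j, P (A j) ≠ ⊤ := by
      have h3 : ∑' j, P (A j) ≤ ENNReal.ofReal (∑' j : ℕ, (B' * F 2) * θ' ^ j) := by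
        rw [ENNReal.ofReal_tsum_of_nonneg (fun j => by positivity) hsummable]
        exact ENNReal.tsum_le_tsum hAle
      exact ne_top_of_le_ne_top ENNReal.ofReal_ne_top h3
    have hlimsup : P (limsup A atTop) = 0 := measure_limsup_atTop_eq_zero hsumA
    have hae : ∀ᵐ ω ∂P, ω ∉ limsup A atTop := measure_eq_zero_iff_ae_notMem.mp hlimsup
    filter_upwards [hae] with ω hω
    have hfin : ∀ᶠ j in atTop, ω ∉ A j := by
      by_contra hc
      exact hω (mem_limsup_iff_frequently_mem.mpr
        (((Filter.not_eventually.mp hc)).mono (fun j hj => not_not.mp hj)))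
    obtain ⟨N, hN⟩ := eventually_atTop.mp hfin
    rw [← summable_nat_add_iff N]
    refine Summable.of_nonneg_of_le (f := fun j => (2 * Real.exp (-(lam * d))) * r ^ j)
      (fun j => mul_nonneg (hXpos _ _) (Real.exp_pos _).le) (fun j => ?_)
      ((summable_geometric_of_lt_one hr0.le hr1).mul_left _)
    ·
      have hA : ω ∉ A (j + N) := hN (j + N) (Nat.le_add_left _ _)
      have hXle : X (j + N) ω ≤ 1 * a ^ (j + N) * 2 := le_of_not_gt hA
      have hexp : (0:ℝ) < Real.exp (-lam * (((j + N : ℕ) : ℝ) + d)) := Real.exp_pos _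
      calc X (j + N) ω * Real.exp (-lam * (((j + N : ℕ) : ℝ) + d))
          ≤ (1 * a ^ (j + N) * 2) * Real.exp (-lam * (((j + N : ℕ) : ℝ) + d)) :=
            mul_le_mul_of_nonneg_right hXle hexp.le
        _ = 2 * (a ^ (j + N) * Real.exp (-lam * (((j + N : ℕ) : ℝ) + d))) := by ring
        _ = 2 * (Real.exp (-(lam * d)) * r ^ (j + N)) := by rw [hkey (j + N)]
        _ = (2 * Real.exp (-(lam * d)) * r ^ N) * r ^ j := by rw [pow_add]; ring
        _ ≤ (2 * Real.exp (-(lam * d))) * r ^ j := by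
            have h1 : r ^ N ≤ 1 := pow_le_one₀ hr0.le hr1.le
            have h2 : (0:ℝ) ≤ r ^ j := pow_nonneg hr0.le j
            have hE : (0:ℝ) ≤ 2 * Real.exp (-(lam * d)) := by positivity
            calc (2 * Real.exp (-(lam * d)) * r ^ N) * r ^ j
                ≤ (2 * Real.exp (-(lam * d)) * 1) * r ^ j :=
                  mul_le_mul_of_nonneg_right (mul_le_mul_of_nonneg_left h1 hE) h2
              _ = (2 * Real.exp (-(lam * d))) * r ^ j := by rw [mul_one]
  · -- tail bound
    have h1θ : (0:ℝ) < 1 - θ := by linarith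
    refine ⟨B * (1 - θ)⁻¹, by positivity, fun t ht => ?_⟩
    have htpos : (0:ℝ) < t := lt_trans one_pos ht
    have hsub : {ω | t < ∑' j : ℕ, X j ω * Real.exp (-lam * ((j : ℝ) + d))}
        ⊆ ⋃ j : ℕ, {ω | K * a ^ j * t < X j ω} := by
      intro ω hω
      simp only [Set.mem_setOf_eq] at hω
      by_contra hc
      simp only [Set.mem_iUnion, Set.mem_setOf_eq, not_exists, not_lt] at hc
      set f : ℕ → ℝ := fun j => X j ω * Real.exp (-lam * ((j : ℝ) + d)) with hfdef
      have hterm : ∀ j, f j ≤ (t * (1 - r)) * r ^ j := by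
        intro j
        have h1 : f j ≤ (K * a ^ j * t) * Real.exp (-lam * ((j : ℝ) + d)) :=
          mul_le_mul_of_nonneg_right (hc j) (Real.exp_pos _).le
        have h2 : (K * a ^ j * t) * Real.exp (-lam * ((j : ℝ) + d))
            = (t * (1 - r)) * r ^ j := by
          have h3 := hkey j
          have h4 : Real.exp (lam * d) * Real.exp (-(lam * d)) = 1 := by
            rw [← Real.exp_add]; simp
          calc (K * a ^ j * t) * Real.exp (-lam * ((j : ℝ) + d))
              = ((1 - r) * Real.exp (lam * d) * t) *
                (a ^ j * Real.exp (-lam * ((j : ℝ) + d))) := by rw [hKdef]; ring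
            _ = ((1 - r) * Real.exp (lam * d) * t) *
                (Real.exp (-(lam * d)) * r ^ j) := by rw [h3]
            _ = (t * (1 - r)) * ((Real.exp (lam * d) * Real.exp (-(lam * d))) * r ^ j) := by
                ring
            _ = (t * (1 - r)) * r ^ j := by rw [h4, one_mul]
        exact h1.trans h2.le
      by_cases hs : Summable f
      · have hle : ∑' j, f j ≤ ∑' j : ℕ, (t * (1 - r)) * r ^ j :=
          Summable.tsum_le_tsum hterm hs ((summable_geometric_of_lt_one hr0.le hr1).mul_left _)
        have heq : ∑' j : ℕ, (t * (1 - r)) * r ^ j = t := by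
          rw [tsum_mul_left, tsum_geometric_of_lt_one hr0.le hr1,
            mul_inv_cancel_right₀ (by linarith : (1:ℝ) - r ≠ 0)]
        rw [heq] at hle
        exact absurd hω (not_lt.mpr hle)
      · rw [tsum_eq_zero_of_not_summable hs] at hω
        linarith
    have hmeasle : P {ω | t < ∑' j : ℕ, X j ω * Real.exp (-lam * ((j : ℝ) + d))}
        ≤ ENNReal.ofReal ((B * F t) * (1 - θ)⁻¹) := by
      have hU : ∀ j : ℕ, P {ω | K * a ^ j * t < X j ω}
          ≤ ENNReal.ofReal ((B * F t) * θ ^ j) := by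
        intro j
        have h1 : P {ω | K * a ^ j * t < X j ω} = P {ω | K * a ^ j * t < X0 ω} := hid j _
        have h2 : (P {ω | K * a ^ j * t < X0 ω}).toReal ≤ (B * F t) * θ ^ j :=
          hbound t ht j
        calc P {ω | K * a ^ j * t < X j ω}
            = ENNReal.ofReal ((P {ω | K * a ^ j * t < X0 ω}).toReal) := by
              rw [ENNReal.ofReal_toReal (measure_ne_top _ _), h1]
          _ ≤ ENNReal.ofReal ((B * F t) * θ ^ j) := ENNReal.ofReal_le_ofReal h2
      have hsummable2 : Summable (fun j : ℕ => (B * F t) * θ ^ j) :=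
        (summable_geometric_of_lt_one hθ0.le hθ1).mul_left _
      calc P {ω | t < ∑' j : ℕ, X j ω * Real.exp (-lam * ((j : ℝ) + d))}
          ≤ P (⋃ j : ℕ, {ω | K * a ^ j * t < X j ω}) := measure_mono hsub
        _ ≤ ∑' j : ℕ, P {ω | K * a ^ j * t < X j ω} := measure_iUnion_le _
        _ ≤ ∑' j : ℕ, ENNReal.ofReal ((B * F t) * θ ^ j) := ENNReal.tsum_le_tsum hU
        _ = ENNReal.ofReal (∑' j : ℕ, (B * F t) * θ ^ j) :=
            (ENNReal.ofReal_tsum_of_nonneg (fun j => by positivity) hsummable2).symm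
        _ = ENNReal.ofReal ((B * F t) * (1 - θ)⁻¹) := by
            rw [tsum_mul_left, tsum_geometric_of_lt_one hθ0.le hθ1]
    have hfinal := ENNReal.toReal_le_of_le_ofReal
      (by have := hF0 t; positivity) hmeasle
    calc (P {ω | t < ∑' j : ℕ, X j ω * Real.exp (-lam * ((j : ℝ) + d))}).toReal
        ≤ (B * F t) * (1 - θ)⁻¹ := hfinal
      _ = (B * (1 - θ)⁻¹) * (P {ω | t < X0 ω}).toReal := by rw [hFdef]; ring

end Aux

theorem statement7
    {Ω : Type*} [MeasurableSpace Ω] (P : Measure Ω) [IsProbabilityMeasure P]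
    (c : ℤ → Ω → ℝ) (lam : ℝ) (hlam : 0 < lam)
    (hmeas : ∀ x, Measurable (c x)) (hpos : ∀ x ω, 0 < c x ω)
    (hindep : iIndepFun c P)
    (hident : ∀ x, IdentDistrib (c x) (c 0) P P)
    (Linf L0 : ℝ → ℝ) (ainf a0 : ℝ) (hainf : 0 < ainf) (ha0 : 0 < a0)
    (halpha : min a0 ainf < 1)
    (hsvinf : SlowlyVarying Linf) (hsv0 : SlowlyVarying L0)
    (htailinf : ∀ t : ℝ, 1 < t → (P {ω | t < c 0 ω}).toReal = Linf t * t ^ (-ainf))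
    (htail0 : ∀ ε : ℝ, 0 < ε → ε < 1 → (P {ω | c 0 ω < ε}).toReal = L0 (1 / ε) * ε ^ a0)
    (heqcase : a0 = ainf → ∃ (phiInf phi0 : ℝ → ℝ) (gInf g0 : ℝ),
      SlowlyVarying phiInf ∧ SlowlyVarying phi0 ∧ gInf ≠ -1 ∧ g0 ≠ -1 ∧
      (∀ x : ℝ, 1 < x → Linf x = phiInf (Real.log x) * Real.log x ^ gInf) ∧
      (∀ x : ℝ, 1 < x → L0 x = phi0 (Real.log x) * Real.log x ^ g0)) :
    (∀ᵐ ω ∂P,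
        Summable (fun j : ℕ => 1 / c ((j : ℤ) + 1) ω * Real.exp (-lam * ((j : ℝ) + 2))) ∧
        Summable (fun j : ℕ => c (-((j : ℤ) + 2)) ω * Real.exp (-lam * ((j : ℝ) + 3)))) ∧
    ∃ C : ℝ, 0 < C ∧ ∀ t : ℝ, 1 < t →
      (P {ω | t <
          ∑' j : ℕ, 1 / c ((j : ℤ) + 1) ω * Real.exp (-lam * ((j : ℝ) + 2))}).toReal ≤
        C * (P {ω | t < 1 / c 0 ω}).toReal ∧
      (P {ω | t <
          ∑' j : ℕ, c (-((j : ℤ) + 2)) ω * Real.exp (-lam * ((j : ℝ) + 3))}).toReal ≤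
        C * (P {ω | t < c 0 ω}).toReal := by
  have hinv : Measurable fun y : ℝ => 1 / y := by
    simpa [one_div] using (measurable_inv : Measurable fun y : ℝ => y⁻¹)
  -- identical distribution for the V-variables
  have hidV : ∀ (j : ℕ) (s : ℝ),
      P {ω | s < 1 / c ((j : ℤ) + 1) ω} = P {ω | s < 1 / c 0 ω} := by
    intro j s
    have h := ((hident ((j : ℤ) + 1)).comp hinv).measure_mem_eq
      (measurableSet_Ioi (a := s))
    simpa [Set.preimage, Set.mem_Ioi, Function.comp] using h
  have hidW : ∀ (j : ℕ) (s : ℝ),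
      P {ω | s < c (-((j : ℤ) + 2)) ω} = P {ω | s < c 0 ω} := by
    intro j s
    have h := (hident (-((j : ℤ) + 2))).measure_mem_eq (measurableSet_Ioi (a := s))
    simpa [Set.preimage, Set.mem_Ioi] using h
  -- tail of 1 / c 0
  have htailV : ∀ s : ℝ, 1 < s → (P {ω | s < 1 / c 0 ω}).toReal = L0 s * s ^ (-a0) := by
    intro s hs
    have hs0 : (0 : ℝ) < s := lt_trans one_pos hs
    have hset : {ω | s < 1 / c 0 ω} = {ω | c 0 ω < 1 / s} := by
      ext ω
      have hc := hpos 0 ω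
      simp only [Set.mem_setOf_eq]
      rw [lt_div_iff₀ hc, lt_div_iff₀ hs0, mul_comm]
    rw [hset, htail0 (1 / s) (by positivity) ((div_lt_one hs0).mpr hs),
      one_div_one_div, one_div, Real.inv_rpow hs0.le, ← Real.rpow_neg hs0.le]
  obtain ⟨haeV, CV, hCV, hV⟩ := master P (fun j ω => 1 / c ((j : ℤ) + 1) ω)
    (fun ω => 1 / c 0 ω) hidV
    (fun j ω => (one_div_pos.mpr (hpos _ _)).le)
    L0 a0 ha0 hsv0.2.1 hsv0.2.2 htailV lam 2 hlam (by norm_num)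
  obtain ⟨haeW, CW, hCW, hW⟩ := master P (fun j ω => c (-((j : ℤ) + 2)) ω)
    (fun ω => c 0 ω) hidW
    (fun j ω => (hpos _ _).le)
    Linf ainf hainf hsvinf.2.1 hsvinf.2.2 htailinf lam 3 hlam (by norm_num)
  constructor
  · filter_upwards [haeV, haeW] with ω h1 h2
    exact ⟨h1, h2⟩
  · refine ⟨max CV CW, lt_of_lt_of_le hCV (le_max_left _ _), fun t ht => ?_⟩
    constructor
    · exact (hV t ht).trans
        (mul_le_mul_of_nonneg_right (le_max_left _ _) ENNReal.toReal_nonneg)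
    · exact (hW t ht).trans
        (mul_le_mul_of_nonneg_right (le_max_right _ _) ENNReal.toReal_nonneg)
end

section
/- Assume Assumption (Simple Traps). Then ℙ-almost surely there is n_0 such that for all n ≥ n_0, max_{−n ≤ x ≤ n} ρ_x ≤ d_n·e^{q_n}. -/
open MeasureTheory ProbabilityTheory Filter Real

variable {Ω : Type*}

lemma potter_aux (g : ℝ → ℝ) (t0 θ : ℝ) (hθ0 : 0 < θ) (hθ1 : θ < 1)
    (ht0 : 1 ≤ t0)
    (hanti : ∀ s t : ℝ, t0 ≤ s → s ≤ t → g t ≤ g s)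
    (hnn : ∀ t, t0 ≤ t → 0 ≤ g t)
    (hdb : ∀ t, t0 ≤ t → g (2 * t) ≤ θ * g t) :
    ∀ t, t0 ≤ t → ∀ r : ℝ, 0 ≤ r →
      g (t * Real.exp r) ≤ θ⁻¹ * Real.exp (Real.log θ / Real.log 2 * r) * g t := by
  have hpow : ∀ t, t0 ≤ t → ∀ m : ℕ, g (t * 2 ^ m) ≤ θ ^ m * g t := by
    intro t ht m
    induction m with
    | zero => simp
    | succ m ih =>
      have h1 : (1:ℝ) ≤ 2 ^ m := one_le_pow₀ (by norm_num)
      have h2 : t0 ≤ t * 2 ^ m :=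
        le_trans ht (le_mul_of_one_le_right (by linarith) h1)
      have := hdb _ h2
      calc g (t * 2 ^ (m + 1)) = g (2 * (t * 2 ^ m)) := by ring_nf
        _ ≤ θ * g (t * 2 ^ m) := this
        _ ≤ θ * (θ ^ m * g t) := by
            exact mul_le_mul_of_nonneg_left ih hθ0.le
        _ = θ ^ (m + 1) * g t := by ring
  intro t ht r hr
  have hlog2 : 0 < Real.log 2 := Real.log_pos one_lt_two
  set m := Nat.floor (r / Real.log 2) with hm
  have hm_le : (m : ℝ) ≤ r / Real.log 2 := Nat.floor_le (by positivity)
  have h2m : (2:ℝ) ^ m = Real.exp (m * Real.log 2) := by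
    rw [Real.exp_nat_mul, Real.exp_log (by norm_num : (0:ℝ) < 2)]
  have h2m_le : (2:ℝ) ^ m ≤ Real.exp r := by
    rw [h2m]
    apply Real.exp_le_exp.2
    have := (le_div_iff₀ hlog2).1 hm_le
    linarith
  have htpos : (0:ℝ) < t := lt_of_lt_of_le (by linarith) ht
  have ht2m : t0 ≤ t * 2 ^ m :=
    le_trans ht (le_mul_of_one_le_right htpos.le (one_le_pow₀ (by norm_num)))
  have step1 : g (t * Real.exp r) ≤ g (t * 2 ^ m) :=
    hanti _ _ ht2m (mul_le_mul_of_nonneg_left h2m_le htpos.le)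
  have step2 := hpow t ht m
  have hlogθ : Real.log θ < 0 := Real.log_neg hθ0 hθ1
  have hmlb : r / Real.log 2 - 1 < (m : ℝ) := by
    have := Nat.lt_floor_add_one (r / Real.log 2); linarith
  have step3 : θ ^ m ≤ θ⁻¹ * Real.exp (Real.log θ / Real.log 2 * r) := by
    have hθm : θ ^ m = Real.exp ((m : ℝ) * Real.log θ) := by
      rw [Real.exp_nat_mul, Real.exp_log hθ0]
    have hinv : θ⁻¹ = Real.exp (-Real.log θ) := by
      rw [Real.exp_neg, Real.exp_log hθ0]
    rw [hθm, hinv, ← Real.exp_add]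
    apply Real.exp_le_exp.2
    have : (m:ℝ) * Real.log θ ≤ (r / Real.log 2 - 1) * Real.log θ := by
      apply mul_le_mul_of_nonpos_right hmlb.le hlogθ.le
    calc (m:ℝ) * Real.log θ ≤ (r / Real.log 2 - 1) * Real.log θ := this
      _ = -Real.log θ + Real.log θ / Real.log 2 * r := by ring
  have hgt : 0 ≤ g t := hnn t ht
  calc g (t * Real.exp r) ≤ g (t * 2 ^ m) := step1
    _ ≤ θ ^ m * g t := step2
    _ ≤ θ⁻¹ * Real.exp (Real.log θ / Real.log 2 * r) * g t :=
        mul_le_mul_of_nonneg_right step3 hgt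

lemma summable_aux (b : ℝ) (hb : 0 < b) :
    Summable (fun k : ℕ => Real.exp (-(b * ((k : ℝ) * Real.log 2) ^ ((1:ℝ)/4)))) := by
  have hlog2 : 0 < Real.log 2 := Real.log_pos one_lt_two
  set y : ℕ → ℝ := fun k => b * ((k : ℝ) * Real.log 2) ^ ((1:ℝ)/4) with hy
  have hyt : Tendsto y atTop atTop := by
    apply Tendsto.const_mul_atTop hb
    exact (tendsto_rpow_atTop (by norm_num)).comp
      (tendsto_natCast_atTop_atTop.atTop_mul_const hlog2)
  have h8 : ∀ k : ℕ, y k ^ 8 = b ^ 8 * (Real.log 2) ^ 2 * (k : ℝ) ^ 2 := by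
    intro k
    have hk : (0:ℝ) ≤ (k : ℝ) * Real.log 2 := by positivity
    have : (((k : ℝ) * Real.log 2) ^ ((1:ℝ)/4)) ^ (8:ℕ) = ((k : ℝ) * Real.log 2) ^ (2:ℕ) := by
      rw [← Real.rpow_natCast (((k : ℝ) * Real.log 2) ^ ((1:ℝ)/4)) 8, ← Real.rpow_mul hk]
      norm_num
    rw [hy]; simp only []
    rw [mul_pow, this]; ring
  have h0 : Tendsto (fun k : ℕ => (k:ℝ)^2 * Real.exp (-(y k))) atTop (nhds 0) := by
    have := (tendsto_pow_mul_exp_neg_atTop_nhds_zero 8).comp hyt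
    have heq : (fun k : ℕ => (k:ℝ)^2 * Real.exp (-(y k)))
        = fun k : ℕ => (1 / (b ^ 8 * (Real.log 2) ^ 2)) * (y k ^ 8 * Real.exp (-(y k))) := by
      funext k
      rw [h8 k]; field_simp
    rw [heq]
    have := this.const_mul (1 / (b ^ 8 * (Real.log 2) ^ 2))
    simpa using this
  have hev : ∀ᶠ k : ℕ in atTop, Real.exp (-(y k)) ≤ 1 / (k:ℝ)^2 := by
    filter_upwards [h0.eventually_lt_const (by norm_num : (0:ℝ) < 1),
      eventually_gt_atTop 0] with k h1 h2
    have hk2 : (0:ℝ) < (k:ℝ)^2 := by positivity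
    rw [le_div_iff₀ hk2]
    nlinarith [Real.exp_pos (-(y k))]
  apply summable_of_isBigO_nat (Real.summable_one_div_nat_pow.2 (by norm_num : 1 < 2))
  rw [Asymptotics.isBigO_iff]
  refine ⟨1, ?_⟩
  filter_upwards [hev] with k hk
  simp only [Real.norm_eq_abs, abs_of_nonneg (Real.exp_pos _).le, one_mul]
  calc Real.exp (-(y k)) ≤ 1 / (k:ℝ)^2 := hk
    _ ≤ |1 / (k:ℝ)^2| := le_abs_self _

lemma slice_aux (u : ℝ) : ∀ (J : ℕ) (y : ℝ), u ≤ y → y < u * 2 ^ J →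
    ∃ j < J, u * 2 ^ j ≤ y ∧ y < u * 2 ^ (j + 1) := by
  intro J
  induction J with
  | zero => intro y h1 h2; simp at h2; linarith
  | succ J ih =>
    intro y h1 h2
    rcases lt_or_ge y (u * 2 ^ J) with h | h
    · obtain ⟨j, hj, hj1, hj2⟩ := ih y h1 h
      exact ⟨j, Nat.lt_succ_of_lt hj, hj1, hj2⟩
    · exact ⟨J, Nat.lt_succ_self J, h, h2⟩
set_option maxHeartbeats 3200000 in
theorem statement11
    {Ω : Type*} [MeasurableSpace Ω] (P : Measure Ω) [IsProbabilityMeasure P]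
    (c : ℤ → Ω → ℝ) (lam : ℝ) (hlam : 0 < lam)
    (hmeas : ∀ x, Measurable (c x)) (hpos : ∀ x ω, 0 < c x ω)
    (hindep : iIndepFun c P)
    (hident : ∀ x, IdentDistrib (c x) (c 0) P P)
    (Linf L0 : ℝ → ℝ) (ainf a0 : ℝ) (hainf : 0 < ainf) (ha0 : 0 < a0)
    (halpha : min a0 ainf < 1)
    (hsvinf : SlowlyVarying Linf) (hsv0 : SlowlyVarying L0)
    (htailinf : ∀ t : ℝ, 1 < t → (P {ω | t < c 0 ω}).toReal = Linf t * t ^ (-ainf))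
    (htail0 : ∀ ε : ℝ, 0 < ε → ε < 1 → (P {ω | c 0 ω < ε}).toReal = L0 (1 / ε) * ε ^ a0)
    (heqcase : a0 = ainf → ∃ (phiInf phi0 : ℝ → ℝ) (gInf g0 : ℝ),
      SlowlyVarying phiInf ∧ SlowlyVarying phi0 ∧ gInf ≠ -1 ∧ g0 ≠ -1 ∧
      (∀ x : ℝ, 1 < x → Linf x = phiInf (Real.log x) * Real.log x ^ gInf) ∧
      (∀ x : ℝ, 1 < x → L0 x = phi0 (Real.log x) * Real.log x ^ g0))
    (hsimple : Integrable (fun ω => c 0 ω ^ (min a0 ainf)) P ∨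
      Integrable (fun ω => c 0 ω ^ (-(min a0 ainf))) P)
    (d : ℕ → ℝ) (hdpos : ∀ n : ℕ, 2 ≤ n → 0 < d n)
    (hd : Tendsto (fun n : ℕ => (n : ℝ) * (P {ω | d n < rho lam c 0 ω}).toReal)
      atTop (nhds 1)) :
    ∀ᵐ ω ∂P, ∃ n₀ : ℕ, ∀ n : ℕ, n₀ ≤ n → ∀ x : ℤ, -(n : ℤ) ≤ x → x ≤ (n : ℤ) →
      rho lam c x ω ≤ d n * Real.exp (qseq n) := by
  classical
  have hfin : ∀ A : Set Ω, P A ≠ ⊤ := fun A => measure_ne_top P A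
  have pmono : ∀ {A B : Set Ω}, A ⊆ B → (P A).toReal ≤ (P B).toReal :=
    fun {A B} h => ENNReal.toReal_mono (hfin B) (measure_mono h)
  have pnn : ∀ A : Set Ω, 0 ≤ (P A).toReal := fun A => ENNReal.toReal_nonneg
  have punion : ∀ A B : Set Ω, (P (A ∪ B)).toReal ≤ (P A).toReal + (P B).toReal := by
    intro A B
    rw [← ENNReal.toReal_add (hfin A) (hfin B)]
    exact ENNReal.toReal_mono (ENNReal.add_ne_top.2 ⟨hfin A, hfin B⟩) (measure_union_le A B)
  set G : ℝ → ℝ := fun t => (P {ω | t < c 0 ω}).toReal with hG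
  set H : ℝ → ℝ := fun e => (P {ω | c 0 ω < e}).toReal with hH
  set F : ℝ → ℝ := fun t => (P {ω | t < rho lam c 0 ω}).toReal with hFdef
  have Gpos : ∀ t, 1 < t → 0 < G t := by
    intro t ht
    rw [hG]; simp only
    rw [htailinf t ht]
    have h1 := hsvinf.2.1 t (by linarith)
    have h2 : (0:ℝ) < t ^ (-ainf) := Real.rpow_pos_of_pos (by linarith) _
    positivity
  have Hpos : ∀ e, 0 < e → e < 1 → 0 < H e := by
    intro e h1 h2
    rw [hH]; simp only
    rw [htail0 e h1 h2]
    have h3 := hsv0.2.1 (1/e) (by positivity)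
    have h4 : (0:ℝ) < e ^ a0 := Real.rpow_pos_of_pos h1 _
    positivity
  have Ganti : ∀ s t : ℝ, s ≤ t → G t ≤ G s := by
    intro s t hst
    exact pmono (fun ω hw => lt_of_le_of_lt hst hw)
  have Hmono : ∀ s t : ℝ, s ≤ t → H s ≤ H t := by
    intro s t hst
    exact pmono (fun ω hw => lt_of_lt_of_le hw hst)
  have Gnn : ∀ t, 0 ≤ G t := fun t => pnn _
  have Hnn : ∀ e, 0 ≤ H e := fun e => pnn _
  -- identical distribution transfer
  have PIx : ∀ (x : ℤ) (s : Set ℝ), MeasurableSet s → P (c x ⁻¹' s) = P (c 0 ⁻¹' s) :=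
    fun x s hs => (hident x).measure_mem_eq hs
  have Gx : ∀ (x : ℤ) (t : ℝ), (P (c x ⁻¹' Set.Ioi t)).toReal = G t := by
    intro x t
    rw [PIx x _ measurableSet_Ioi]; rfl
  have Hx : ∀ (x : ℤ) (e : ℝ), (P (c x ⁻¹' Set.Iio e)).toReal = H e := by
    intro x e
    rw [PIx x _ measurableSet_Iio]; rfl
  -- independence product
  have hpair : ∀ x : ℤ, IndepFun (c (x-1)) (c x) P :=
    fun x => hindep.indepFun (by omega)
  have prodm : ∀ (x : ℤ) (w : ℝ) (s : Set ℝ), MeasurableSet s →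
      (P (c (x-1) ⁻¹' Set.Ioi w ∩ c x ⁻¹' s)).toReal = G w * (P (c 0 ⁻¹' s)).toReal := by
    intro x w s hs
    rw [(hpair x).measure_inter_preimage_eq_mul _ _ measurableSet_Ioi hs,
      ENNReal.toReal_mul, PIx x s hs]
    congr 1
    exact Gx (x-1) w
  -- rho characterization
  have rhoiff : ∀ (x : ℤ) (t : ℝ) (ω : Ω), t < rho lam c x ω ↔
      Real.exp lam * t * c x ω < c (x-1) ω := by
    intro x t ω
    rw [rho, lt_div_iff₀ (hpos x ω), Real.exp_neg, inv_mul_eq_div,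
      lt_div_iff₀ (Real.exp_pos lam)]
    constructor <;> intro h <;> nlinarith
  -- event inclusion for lower bounds
  have hincl : ∀ (x : ℤ) (t w e : ℝ), 0 < t → 0 < e → Real.exp lam * t * e ≤ w →
      c (x-1) ⁻¹' Set.Ioi w ∩ c x ⁻¹' Set.Iio e ⊆ {ω | t < rho lam c x ω} := by
    intro x t w e ht he hw ω hω
    obtain ⟨h1, h2⟩ := hω
    rw [Set.mem_setOf_eq, rhoiff]
    have hel : (0:ℝ) < Real.exp lam * t := by positivity
    calc Real.exp lam * t * c x ω < Real.exp lam * t * e :=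
          mul_lt_mul_of_pos_left h2 hel
      _ ≤ w := hw
      _ < c (x-1) ω := h1
    -- doubling constants
  set θG : ℝ := ((2:ℝ) ^ (-ainf) + 1) / 2 with hθGdef
  set θH : ℝ := ((2:ℝ) ^ (-a0) + 1) / 2 with hθHdef
  have h2ainf0 : (0:ℝ) < 2 ^ (-ainf) := Real.rpow_pos_of_pos (by norm_num) _
  have h2ainf1 : (2:ℝ) ^ (-ainf) < 1 :=
    Real.rpow_lt_one_of_one_lt_of_neg (by norm_num) (by linarith)
  have h2a00 : (0:ℝ) < 2 ^ (-a0) := Real.rpow_pos_of_pos (by norm_num) _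
  have h2a01 : (2:ℝ) ^ (-a0) < 1 :=
    Real.rpow_lt_one_of_one_lt_of_neg (by norm_num) (by linarith)
  have hθG0 : 0 < θG := by rw [hθGdef]; linarith
  have hθG1 : θG < 1 := by rw [hθGdef]; linarith
  have hθH0 : 0 < θH := by rw [hθHdef]; linarith
  have hθH1 : θH < 1 := by rw [hθHdef]; linarith
  set θG' : ℝ := (2:ℝ) ^ (-ainf) / 2 with hθG'def
  have hθG'0 : 0 < θG' := by rw [hθG'def]; linarith
  have hmulainf : (2:ℝ) ^ ainf * (2:ℝ) ^ (-ainf) = 1 := by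
    rw [← Real.rpow_add (by norm_num)]; simp
  have hmula0 : (2:ℝ) ^ a0 * (2:ℝ) ^ (-a0) = 1 := by
    rw [← Real.rpow_add (by norm_num)]; simp
  have h2ainfgt : (1:ℝ) < 2 ^ ainf := by nlinarith
  have h2a0gt : (1:ℝ) < 2 ^ a0 := by nlinarith
  -- doubling for G
  obtain ⟨tG, htG2, hGdb, hGdb'⟩ : ∃ tG : ℝ, 2 ≤ tG ∧
      (∀ t, tG ≤ t → G (2*t) ≤ θG * G t) ∧ (∀ t, tG ≤ t → θG' * G t ≤ G (2*t)) := by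
    have hlim := hsvinf.2.2 2 (by norm_num)
    have hub : ∀ᶠ t in atTop, Linf (2*t) / Linf t < (1 + 2^ainf)/2 :=
      hlim.eventually_lt_const (by linarith)
    have hlb : ∀ᶠ t in atTop, (1:ℝ)/2 < Linf (2*t) / Linf t :=
      hlim.eventually_const_lt (by norm_num)
    obtain ⟨T, hT⟩ := eventually_atTop.1 (hub.and hlb)
    refine ⟨max 2 T, le_max_left _ _, ?_, ?_⟩ <;> intro t ht
    all_goals {
      have ht2 : (2:ℝ) ≤ t := le_trans (le_max_left _ _) ht
      have htT : T ≤ t := le_trans (le_max_right _ _) ht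
      have ht1 : (1:ℝ) < t := by linarith
      have ht12 : (1:ℝ) < 2*t := by linarith
      have hLt : 0 < Linf t := hsvinf.2.1 t (by linarith)
      have e1 : G (2*t) = Linf (2*t) * (2*t) ^ (-ainf) := by
        rw [hG]; simp only; rw [htailinf _ ht12]
      have e2 : G t = Linf t * t ^ (-ainf) := by
        rw [hG]; simp only; rw [htailinf _ ht1]
      have e3 : (2*t : ℝ) ^ (-ainf) = 2 ^ (-ainf) * t ^ (-ainf) :=
        Real.mul_rpow (by norm_num) (by linarith)
      have e4 : G (2*t) = (Linf (2*t) / Linf t) * 2 ^ (-ainf) * G t := by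
        rw [e1, e2, e3]; field_simp
      have hratio := hT t htT
      have htnn : (0:ℝ) < t ^ (-ainf) := Real.rpow_pos_of_pos (by linarith) _
      have hGt : 0 < G t := by rw [e2]; positivity
      rw [e4]
      first
      | · -- upper bound
          have : (Linf (2*t) / Linf t) * 2 ^ (-ainf) ≤ θG := by
            have h5 : (Linf (2*t) / Linf t) * 2 ^ (-ainf) ≤ ((1 + 2^ainf)/2) * 2 ^ (-ainf) :=
              mul_le_mul_of_nonneg_right hratio.1.le h2ainf0.le
            have h6 : ((1 + 2^ainf)/2) * (2:ℝ) ^ (-ainf) = θG := by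
              rw [hθGdef]; linear_combination hmulainf / 2
            linarith
          exact mul_le_mul_of_nonneg_right this hGt.le
      | · -- lower bound
          have : θG' ≤ (Linf (2*t) / Linf t) * 2 ^ (-ainf) := by
            have h5 : ((1:ℝ)/2) * 2 ^ (-ainf) ≤ (Linf (2*t) / Linf t) * 2 ^ (-ainf) :=
              mul_le_mul_of_nonneg_right hratio.2.le h2ainf0.le
            have h6 : ((1:ℝ)/2) * (2:ℝ) ^ (-ainf) = θG' := by
              rw [hθG'def]; ring
            linarith
          exact mul_le_mul_of_nonneg_right this hGt.le
    }
    -- doubling for H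
  obtain ⟨eH, heH0, heH12, hHdb⟩ : ∃ eH : ℝ, 0 < eH ∧ eH ≤ 1/2 ∧
      ∀ e, 0 < e → e ≤ eH → H (e/2) ≤ θH * H e := by
    have hlim := hsv0.2.2 2 (by norm_num)
    have hub : ∀ᶠ s in atTop, L0 (2*s) / L0 s < (1 + 2^a0)/2 :=
      hlim.eventually_lt_const (by linarith)
    obtain ⟨S, hS⟩ := eventually_atTop.1 hub
    set S' : ℝ := max S 2 with hS'
    have hS'2 : (2:ℝ) ≤ S' := le_max_right _ _
    refine ⟨min (1/2) S'⁻¹, by positivity, min_le_left _ _, ?_⟩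
    intro e he0 heH
    have hS'pos : (0:ℝ) < S' := by linarith
    have heinv : S' ≤ 1/e := by
      have h1 : e ≤ S'⁻¹ := le_trans heH (min_le_right _ _)
      rw [le_div_iff₀ he0]
      calc S' * e ≤ S' * S'⁻¹ := mul_le_mul_of_nonneg_left h1 hS'pos.le
        _ = 1 := mul_inv_cancel₀ hS'pos.ne'
    have he1 : e < 1 := lt_of_le_of_lt (le_trans heH (min_le_left _ _)) (by norm_num)
    have he2 : e/2 < 1 := by linarith
    have hL0 : 0 < L0 (1/e) := hsv0.2.1 _ (by positivity)
    have e1 : H (e/2) = L0 (1/(e/2)) * (e/2) ^ a0 := by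
      rw [hH]; simp only; rw [htail0 _ (by linarith) he2]
    have e2 : H e = L0 (1/e) * e ^ a0 := by
      rw [hH]; simp only; rw [htail0 _ he0 he1]
    have e3 : (1:ℝ)/(e/2) = 2 * (1/e) := by field_simp
    have e4 : ((e:ℝ)/2) ^ a0 = e ^ a0 * 2 ^ (-a0) := by
      rw [div_rpow he0.le (by norm_num : (0:ℝ) ≤ 2), Real.rpow_neg (by norm_num)]
      ring
    have e5 : H (e/2) = (L0 (2*(1/e)) / L0 (1/e)) * 2 ^ (-a0) * H e := by
      rw [e1, e2, e3, e4]; field_simp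
    have hratio := hS (1/e) (le_trans (le_max_left _ _) heinv)
    have hea0 : (0:ℝ) < e ^ a0 := Real.rpow_pos_of_pos he0 _
    have hHe : 0 ≤ H e := Hnn e
    rw [e5]
    have h5 : (L0 (2*(1/e)) / L0 (1/e)) * 2 ^ (-a0) ≤ ((1 + 2^a0)/2) * 2 ^ (-a0) :=
      mul_le_mul_of_nonneg_right hratio.le h2a00.le
    have h6 : ((1 + 2^a0)/2) * (2:ℝ) ^ (-a0) = θH := by
      rw [hθHdef]; linear_combination hmula0 / 2
    have h7 : (L0 (2*(1/e)) / L0 (1/e)) * 2 ^ (-a0) ≤ θH := by linarith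
    exact mul_le_mul_of_nonneg_right h7 hHe
  -- Potter bounds
  have Gpotter : ∀ t, tG ≤ t → ∀ r : ℝ, 0 ≤ r →
      G (t * Real.exp r) ≤ θG⁻¹ * Real.exp (Real.log θG / Real.log 2 * r) * G t :=
    potter_aux G tG θG hθG0 hθG1 (by linarith)
      (fun s t _ hst => Ganti s t hst) (fun t _ => Gnn t) hGdb
  have Hpotter : ∀ e, 0 < e → e ≤ eH → ∀ r : ℝ, 0 ≤ r →
      H (e * Real.exp (-r)) ≤ θH⁻¹ * Real.exp (Real.log θH / Real.log 2 * r) * H e := by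
    have base := potter_aux (fun t => H (1/t)) eH⁻¹ θH hθH0 hθH1
      (by rw [le_inv_comm₀ (by norm_num) heH0]; linarith)
      (fun s t hs hst => by
        have hs0 : (0:ℝ) < s := lt_of_lt_of_le (by positivity) hs
        exact Hmono _ _ (by
          apply div_le_div_of_nonneg_left (by norm_num) hs0 hst))
      (fun t _ => Hnn _)
      (fun t ht => by
        have ht0 : (0:ℝ) < t := lt_of_lt_of_le (by positivity) ht
        have h1 : (1:ℝ)/(2*t) = (1/t)/2 := by field_simp
        rw [h1]
        exact hHdb (1/t) (by positivity) (by
          rw [div_le_iff₀ ht0]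
          calc (1:ℝ) = eH * eH⁻¹ := (mul_inv_cancel₀ heH0.ne').symm
            _ ≤ eH * t := mul_le_mul_of_nonneg_left ht heH0.le))
    intro e he0 heHe r hr
    have h1 : eH⁻¹ ≤ e⁻¹ := by
      exact inv_anti₀ he0 heHe
    have happ := base e⁻¹ h1 r hr
    have h2 : (1:ℝ)/(e⁻¹ * Real.exp r) = e * Real.exp (-r) := by
      rw [Real.exp_neg]; field_simp
    have h3 : (1:ℝ)/e⁻¹ = e := by field_simp
    rwa [h2, h3] at happ
    -- consequences of hd
  have hdF : Tendsto (fun n : ℕ => (n : ℝ) * F (d n)) atTop (nhds 1) := hd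
  have hF2 : ∀ᶠ n : ℕ in atTop, (n:ℝ) * F (d n) < 2 :=
    hdF.eventually_lt_const (by norm_num)
  have hexp1 : (1:ℝ) < Real.exp lam := by
    rw [← Real.exp_zero]; exact Real.exp_lt_exp.2 hlam
  have Fanti : ∀ s t : ℝ, s ≤ t → F t ≤ F s := by
    intro s t hst
    exact pmono (fun ω hw => lt_of_le_of_lt hst hw)
  have Hhalf : 0 < H (1/2) := Hpos _ (by norm_num) (by norm_num)
  have FlbG : ∀ t : ℝ, 0 < t → G (Real.exp lam * t) * H (1/2) ≤ F t := by
    intro t ht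
    have h1 := hincl 0 t (Real.exp lam * t) (1/2) ht (by norm_num)
      (by
        have hh : 0 ≤ Real.exp lam * t := by positivity
        linarith)
    have h2 := prodm 0 (Real.exp lam * t) (Set.Iio (1/2)) measurableSet_Iio
    have h3 : (P (c 0 ⁻¹' Set.Iio (1/2))).toReal = H (1/2) := Hx 0 _
    rw [h3] at h2
    rw [← h2]
    exact pmono h1
  have hdtop : Tendsto d atTop atTop := by
    rw [tendsto_atTop]
    intro M
    set M' : ℝ := max M 1 with hM'
    have hM'1 : (1:ℝ) ≤ M' := le_max_right _ _
    have hFM : 0 < F M' := by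
      have hG1 : 0 < G (Real.exp lam * M') :=
        Gpos _ (lt_of_lt_of_le hexp1 (le_mul_of_one_le_right (by positivity) hM'1))
      calc (0:ℝ) < G (Real.exp lam * M') * H (1/2) := by positivity
        _ ≤ F M' := FlbG M' (by linarith)
    have hev : ∀ᶠ n : ℕ in atTop, F (d n) < F M' := by
      have hn : ∀ᶠ n : ℕ in atTop, (2:ℝ)/F M' < (n:ℝ) :=
        tendsto_natCast_atTop_atTop.eventually_gt_atTop _
      filter_upwards [hF2, hn] with n h1 h2
      have h3 : (2:ℝ) < (n:ℝ) * F M' := (div_lt_iff₀ hFM).1 h2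
      have hn0 : (0:ℝ) < (n:ℝ) := lt_trans (by positivity) h2
      have h4 : (n:ℝ) * F (d n) < (n:ℝ) * F M' := by linarith
      exact lt_of_mul_lt_mul_left h4 hn0.le
    filter_upwards [hev] with n hn
    by_contra hcon
    push_neg at hcon
    have : F M' ≤ F (d n) := Fanti _ _ (by
      calc d n ≤ M := hcon.le
        _ ≤ M' := le_max_left _ _)
    linarith
    -- main quantitative estimate
  have GtGpos : 0 < G tG := Gpos tG (by linarith)
  set β : ℝ := min (-(Real.log θG / Real.log 2)/2) (-(Real.log θH / Real.log 2)/2) with hβdef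
  have hlog2pos : 0 < Real.log 2 := Real.log_pos one_lt_two
  have hLG : Real.log θG / Real.log 2 < 0 :=
    div_neg_of_neg_of_pos (Real.log_neg hθG0 hθG1) hlog2pos
  have hLH : Real.log θH / Real.log 2 < 0 :=
    div_neg_of_neg_of_pos (Real.log_neg hθH0 hθH1) hlog2pos
  have hβ0 : 0 < β := lt_min (by linarith) (by linarith)
  have hβG : β ≤ -(Real.log θG / Real.log 2)/2 := min_le_left _ _
  have hβH : β ≤ -(Real.log θH / Real.log 2)/2 := min_le_right _ _
  set Cst : ℝ := θH⁻¹ * (G tG)⁻¹ + θG⁻¹ + θG⁻¹ * θG'⁻¹ + θG⁻¹ * (H (1/2))⁻¹ with hCstdef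
  have hCst0 : 0 < Cst := by
    have h1 : 0 < θH⁻¹ * (G tG)⁻¹ := mul_pos (inv_pos.2 hθH0) (inv_pos.2 GtGpos)
    have h2 : 0 < θG⁻¹ := inv_pos.2 hθG0
    have h3 : 0 < θG⁻¹ * θG'⁻¹ := mul_pos h2 (inv_pos.2 hθG'0)
    have h4 : 0 < θG⁻¹ * (H (1/2))⁻¹ := mul_pos h2 (inv_pos.2 Hhalf)
    rw [hCstdef]; linarith
  have key : ∀ᶠ N : ℕ in atTop, True := by exact Filter.Eventually.of_forall (fun _ => trivial)
  clear key
  have key : ∃ N0 : ℕ, 2 ≤ N0 ∧ ∀ n, N0 ≤ n → ∀ x : ℤ,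
      (P {ω | d n * Real.exp (qseq n) < rho lam c x ω}).toReal ≤
        2 * Cst * Real.exp (-(β * qseq n)) / n := by
    have hev2 : ∀ᶠ n : ℕ in atTop, tG * Real.exp (-lam) / eH ≤ d n :=
      hdtop.eventually_ge_atTop _
    obtain ⟨N0, hN0⟩ := eventually_atTop.1 ((hF2.and hev2).and (eventually_ge_atTop 2))
    refine ⟨max N0 2, le_max_right _ _, ?_⟩
    intro n hn x
    obtain ⟨⟨hFn, hdn2⟩, hn2⟩ := hN0 n (le_trans (le_max_left _ _) hn)
    have hdn : 0 < d n := hdpos n hn2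
    have hnR : (2:ℝ) ≤ (n:ℝ) := by exact_mod_cast hn2
    have hFdn : F (d n) ≤ 2 / (n:ℝ) := by
      rw [le_div_iff₀ (by linarith : (0:ℝ) < (n:ℝ)), mul_comm]
      exact hFn.le
    set q : ℝ := qseq n with hq
    have hq0 : 0 ≤ q := by rw [hq, qseq]; positivity
    have hq20 : 0 ≤ q/2 := by linarith
    set T : ℝ := d n * Real.exp q with hT
    have hT0 : 0 < T := by rw [hT]; positivity
    set u : ℝ := tG * Real.exp (-lam) / d n with hu
    have hu0 : 0 < u := by rw [hu]; positivity
    have hueH : u ≤ eH := by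
      rw [hu, div_le_iff₀ hdn]
      calc tG * Real.exp (-lam) = (tG * Real.exp (-lam) / eH) * eH := by field_simp
        _ ≤ d n * eH := mul_le_mul_of_nonneg_right hdn2 heH0.le
        _ = eH * d n := mul_comm _ _
    have hee : Real.exp lam * Real.exp (-lam) = 1 := by rw [← Real.exp_add]; simp
    have hukey : Real.exp lam * d n * u = tG := by
      rw [hu]
      field_simp
      linear_combination hee
    have htGdn : tG ≤ Real.exp lam * d n := by
      have ha : 0 < tG * Real.exp (-lam) := by positivity
      have h2 : tG * Real.exp (-lam) ≤ tG * Real.exp (-lam) / eH := by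
        rw [le_div_iff₀ heH0]
        exact mul_le_of_le_one_right ha.le (by linarith)
      have h3 : tG * Real.exp (-lam) ≤ d n := le_trans h2 hdn2
      calc tG = Real.exp lam * (tG * Real.exp (-lam)) := by linear_combination (-tG) * hee
        _ ≤ Real.exp lam * d n := mul_le_mul_of_nonneg_left h3 (Real.exp_pos lam).le
    obtain ⟨J, hJ1⟩ : ∃ J : ℕ, 1 ≤ u * 2 ^ J := by
      obtain ⟨J, hJ⟩ := pow_unbounded_of_one_lt (1/u) (one_lt_two (α := ℝ))
      refine ⟨J, ?_⟩
      rw [div_lt_iff₀ hu0] at hJ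
      rw [mul_comm] at hJ
      exact hJ.le
    -- the four regions
    set A0 : Set Ω := c x ⁻¹' Set.Iio (u * Real.exp (-(q/2))) with hA0def
    set A1 : Set Ω := c (x-1) ⁻¹' Set.Ioi (tG * Real.exp (q/2)) ∩ c x ⁻¹' Set.Iio u with hA1def
    set Atop : Set Ω := c (x-1) ⁻¹' Set.Ioi (Real.exp lam * d n * Real.exp q) with hAtopdef
    set AS : ℕ → Set Ω := fun j =>
      c (x-1) ⁻¹' Set.Ioi (tG * 2^j * Real.exp q) ∩ c x ⁻¹' Set.Ico (u * 2^j) (u * 2^(j+1))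
      with hASdef
    have hcover : {ω | T < rho lam c x ω} ⊆
        A0 ∪ (A1 ∪ (Atop ∪ ⋃ j ∈ Finset.range J, AS j)) := by
      intro ω hω
      have hxω := (rhoiff x T ω).1 hω
      have hy := hpos x ω
      have heT : 0 < Real.exp lam * T := by positivity
      rcases lt_or_ge (c x ω) (u * Real.exp (-(q/2))) with h0 | h0
      · exact Set.mem_union_left _ h0
      rcases lt_or_ge (c x ω) u with h1 | h1
      · refine Set.mem_union_right _ (Set.mem_union_left _ ⟨?_, h1⟩)
        show tG * Real.exp (q/2) < c (x-1) ω
        have h2 : Real.exp lam * T * (u * Real.exp (-(q/2))) = tG * Real.exp (q/2) := by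
          rw [hT]
          calc Real.exp lam * (d n * Real.exp q) * (u * Real.exp (-(q/2)))
              = (Real.exp lam * d n * u) * (Real.exp q * Real.exp (-(q/2))) := by ring
            _ = tG * Real.exp (q/2) := by
                rw [hukey, ← Real.exp_add]; ring_nf
        calc tG * Real.exp (q/2) = Real.exp lam * T * (u * Real.exp (-(q/2))) := h2.symm
          _ ≤ Real.exp lam * T * c x ω := mul_le_mul_of_nonneg_left h0 heT.le
          _ < c (x-1) ω := hxω
      rcases lt_or_ge (c x ω) (u * 2^J) with h2 | h2
      · obtain ⟨j, hjJ, hj1, hj2⟩ := slice_aux u J (c x ω) h1 h2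
        refine Set.mem_union_right _ (Set.mem_union_right _ (Set.mem_union_right _ ?_))
        refine Set.mem_biUnion (Finset.mem_range.2 hjJ) ⟨?_, hj1, hj2⟩
        show tG * 2^j * Real.exp q < c (x-1) ω
        have h3 : Real.exp lam * T * (u * 2^j) = tG * 2^j * Real.exp q := by
          rw [hT]
          calc Real.exp lam * (d n * Real.exp q) * (u * 2^j)
              = (Real.exp lam * d n * u) * 2^j * Real.exp q := by ring
            _ = tG * 2^j * Real.exp q := by rw [hukey]
        calc tG * 2^j * Real.exp q = Real.exp lam * T * (u * 2^j) := h3.symm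
          _ ≤ Real.exp lam * T * c x ω := mul_le_mul_of_nonneg_left hj1 heT.le
          _ < c (x-1) ω := hxω
      · refine Set.mem_union_right _ (Set.mem_union_right _ (Set.mem_union_left _ ?_))
        show Real.exp lam * d n * Real.exp q < c (x-1) ω
        have h3 : Real.exp lam * d n * Real.exp q = Real.exp lam * T * 1 := by rw [hT]; ring
        have h4 : (1:ℝ) ≤ c x ω := le_trans hJ1 h2
        calc Real.exp lam * d n * Real.exp q = Real.exp lam * T * 1 := h3
          _ ≤ Real.exp lam * T * c x ω := mul_le_mul_of_nonneg_left h4 heT.le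
          _ < c (x-1) ω := hxω
    -- bounds for each region
    have hexpG2 : Real.exp (Real.log θG / Real.log 2 * (q/2)) ≤ Real.exp (-(β * q)) := by
      apply Real.exp_le_exp.2
      have h1 := mul_le_mul_of_nonneg_right hβG hq0
      linarith
    have hexpG1 : Real.exp (Real.log θG / Real.log 2 * q) ≤ Real.exp (-(β * q)) := by
      apply Real.exp_le_exp.2
      have h1 := mul_le_mul_of_nonneg_right hβG hq0
      have h2 := mul_le_mul_of_nonneg_right
        (show -(Real.log θG / Real.log 2)/2 ≤ -(Real.log θG / Real.log 2) by linarith) hq0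
      linarith
    have hexpH2 : Real.exp (Real.log θH / Real.log 2 * (q/2)) ≤ Real.exp (-(β * q)) := by
      apply Real.exp_le_exp.2
      have h1 := mul_le_mul_of_nonneg_right hβH hq0
      linarith
    have hHuF : H u ≤ (G tG)⁻¹ * F (d n) := by
      have hi := hincl 0 (d n) tG u hdn hu0 (le_of_eq hukey)
      have hp := prodm 0 tG (Set.Iio u) measurableSet_Iio
      rw [Hx 0 u] at hp
      have : G tG * H u ≤ F (d n) := by
        rw [← hp]; exact pmono hi
      calc H u = (G tG)⁻¹ * (G tG * H u) := by field_simp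
        _ ≤ (G tG)⁻¹ * F (d n) := mul_le_mul_of_nonneg_left this (inv_pos.2 GtGpos).le
    have hGdnF : G (Real.exp lam * d n) ≤ (H (1/2))⁻¹ * F (d n) := by
      have := FlbG (d n) hdn
      calc G (Real.exp lam * d n) = (H (1/2))⁻¹ * (G (Real.exp lam * d n) * H (1/2)) := by
            field_simp
        _ ≤ (H (1/2))⁻¹ * F (d n) := mul_le_mul_of_nonneg_left this (inv_pos.2 Hhalf).le
    have hbA0 : (P A0).toReal ≤ θH⁻¹ * (G tG)⁻¹ * Real.exp (-(β * q)) * F (d n) := by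
      have l1 : (P A0).toReal = H (u * Real.exp (-(q/2))) := Hx x _
      have l2 := Hpotter u hu0 hueH (q/2) hq20
      calc (P A0).toReal = H (u * Real.exp (-(q/2))) := l1
        _ ≤ θH⁻¹ * Real.exp (Real.log θH / Real.log 2 * (q/2)) * H u := l2
        _ ≤ θH⁻¹ * Real.exp (-(β * q)) * H u := by
            apply mul_le_mul_of_nonneg_right _ (Hnn u)
            exact mul_le_mul_of_nonneg_left hexpH2 (inv_pos.2 hθH0).le
        _ ≤ θH⁻¹ * Real.exp (-(β * q)) * ((G tG)⁻¹ * F (d n)) := by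
            apply mul_le_mul_of_nonneg_left hHuF
            exact mul_nonneg (inv_pos.2 hθH0).le (Real.exp_pos _).le
        _ = θH⁻¹ * (G tG)⁻¹ * Real.exp (-(β * q)) * F (d n) := by ring
    have hbA1 : (P A1).toReal ≤ θG⁻¹ * Real.exp (-(β * q)) * F (d n) := by
      have l1 : (P A1).toReal = G (tG * Real.exp (q/2)) * H u := by
        have hp := prodm x (tG * Real.exp (q/2)) (Set.Iio u) measurableSet_Iio
        rw [Hx 0 u] at hp
        exact hp
      have l2 := Gpotter tG le_rfl (q/2) hq20
      have l3 : G (tG * Real.exp (q/2)) ≤ θG⁻¹ * Real.exp (-(β * q)) * G tG := by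
        calc G (tG * Real.exp (q/2)) ≤ θG⁻¹ * Real.exp (Real.log θG / Real.log 2 * (q/2)) * G tG := l2
          _ ≤ θG⁻¹ * Real.exp (-(β * q)) * G tG := by
              apply mul_le_mul_of_nonneg_right _ (Gnn tG)
              exact mul_le_mul_of_nonneg_left hexpG2 (inv_pos.2 hθG0).le
      calc (P A1).toReal = G (tG * Real.exp (q/2)) * H u := l1
        _ ≤ (θG⁻¹ * Real.exp (-(β * q)) * G tG) * ((G tG)⁻¹ * F (d n)) := by
            apply mul_le_mul l3 hHuF (Hnn u)
            have : (0:ℝ) < θG⁻¹ * Real.exp (-(β * q)) * G tG :=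
              mul_pos (mul_pos (inv_pos.2 hθG0) (Real.exp_pos _)) GtGpos
            linarith
        _ = θG⁻¹ * Real.exp (-(β * q)) * F (d n) * (G tG * (G tG)⁻¹) := by ring
        _ = θG⁻¹ * Real.exp (-(β * q)) * F (d n) := by
            rw [mul_inv_cancel₀ GtGpos.ne', mul_one]
    have hbAtop : (P Atop).toReal ≤ θG⁻¹ * (H (1/2))⁻¹ * Real.exp (-(β * q)) * F (d n) := by
      have l1 : (P Atop).toReal = G (Real.exp lam * d n * Real.exp q) := Gx (x-1) _
      have l2 := Gpotter (Real.exp lam * d n) htGdn q hq0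
      calc (P Atop).toReal = G (Real.exp lam * d n * Real.exp q) := l1
        _ ≤ θG⁻¹ * Real.exp (Real.log θG / Real.log 2 * q) * G (Real.exp lam * d n) := l2
        _ ≤ θG⁻¹ * Real.exp (-(β * q)) * G (Real.exp lam * d n) := by
            apply mul_le_mul_of_nonneg_right _ (Gnn _)
            exact mul_le_mul_of_nonneg_left hexpG1 (inv_pos.2 hθG0).le
        _ ≤ θG⁻¹ * Real.exp (-(β * q)) * ((H (1/2))⁻¹ * F (d n)) := by
            apply mul_le_mul_of_nonneg_left hGdnF
            exact mul_nonneg (inv_pos.2 hθG0).le (Real.exp_pos _).le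
        _ = θG⁻¹ * (H (1/2))⁻¹ * Real.exp (-(β * q)) * F (d n) := by ring
    set pj : ℕ → ℝ := fun j => (P (c 0 ⁻¹' Set.Ico (u * 2^j) (u * 2^(j+1)))).toReal with hpjdef
    have hpjnn : ∀ j, 0 ≤ pj j := fun j => pnn _
    have hbAS : ∀ j, (P (AS j)).toReal ≤
        θG⁻¹ * θG'⁻¹ * Real.exp (-(β * q)) * (G (tG * 2^(j+1)) * pj j) := by
      intro j
      have htGj : tG ≤ tG * 2^j :=
        le_mul_of_one_le_right (by linarith) (one_le_pow₀ (by norm_num : (1:ℝ) ≤ 2))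
      have l1 : (P (AS j)).toReal = G (tG * 2^j * Real.exp q) * pj j :=
        prodm x (tG * 2^j * Real.exp q) (Set.Ico (u * 2^j) (u * 2^(j+1))) measurableSet_Ico
      have l2 := Gpotter (tG * 2^j) htGj q hq0
      have l3 : G (tG * 2^j) ≤ θG'⁻¹ * G (tG * 2^(j+1)) := by
        have hdb := hGdb' (tG * 2^j) htGj
        have harg : (2:ℝ) * (tG * 2^j) = tG * 2^(j+1) := by ring
        rw [harg] at hdb
        calc G (tG * 2^j) = θG'⁻¹ * (θG' * G (tG * 2^j)) := by field_simp
          _ ≤ θG'⁻¹ * G (tG * 2^(j+1)) :=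
              mul_le_mul_of_nonneg_left hdb (inv_pos.2 hθG'0).le
      have l4 : G (tG * 2^j * Real.exp q) ≤
          θG⁻¹ * θG'⁻¹ * Real.exp (-(β * q)) * G (tG * 2^(j+1)) := by
        calc G (tG * 2^j * Real.exp q)
            ≤ θG⁻¹ * Real.exp (Real.log θG / Real.log 2 * q) * G (tG * 2^j) := l2
          _ ≤ θG⁻¹ * Real.exp (-(β * q)) * G (tG * 2^j) := by
              apply mul_le_mul_of_nonneg_right _ (Gnn _)
              exact mul_le_mul_of_nonneg_left hexpG1 (inv_pos.2 hθG0).le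
          _ ≤ θG⁻¹ * Real.exp (-(β * q)) * (θG'⁻¹ * G (tG * 2^(j+1))) := by
              apply mul_le_mul_of_nonneg_left l3
              exact mul_nonneg (inv_pos.2 hθG0).le (Real.exp_pos _).le
          _ = θG⁻¹ * θG'⁻¹ * Real.exp (-(β * q)) * G (tG * 2^(j+1)) := by ring
      calc (P (AS j)).toReal = G (tG * 2^j * Real.exp q) * pj j := l1
        _ ≤ (θG⁻¹ * θG'⁻¹ * Real.exp (-(β * q)) * G (tG * 2^(j+1))) * pj j :=
            mul_le_mul_of_nonneg_right l4 (hpjnn j)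
        _ = θG⁻¹ * θG'⁻¹ * Real.exp (-(β * q)) * (G (tG * 2^(j+1)) * pj j) := by ring
    have hsumlb : ∑ j ∈ Finset.range J, G (tG * 2^(j+1)) * pj j ≤ F (d n) := by
      set B : ℕ → Set Ω := fun j =>
        c ((0:ℤ)-1) ⁻¹' Set.Ioi (tG * 2^(j+1)) ∩ c (0:ℤ) ⁻¹' Set.Ico (u * 2^j) (u * 2^(j+1))
        with hBdef
      have hBm : ∀ j, MeasurableSet (B j) :=
        fun j => ((hmeas _) measurableSet_Ioi).inter ((hmeas _) measurableSet_Ico)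
      have hdisj : Set.PairwiseDisjoint ↑(Finset.range J) B := by
        intro i _ j _ hij
        apply Set.disjoint_left.2
        intro ω hωi hωj
        have h1 := hωi.2
        have h2 := hωj.2
        rcases lt_or_gt_of_ne hij with hlt | hlt
        · have h3 : u * 2^(i+1) ≤ u * 2^j :=
            mul_le_mul_of_nonneg_left (pow_le_pow_right₀ (by norm_num) hlt) hu0.le
          have h4 := h1.2
          have h5 := h2.1
          linarith
        · have h3 : u * 2^(j+1) ≤ u * 2^i :=
            mul_le_mul_of_nonneg_left (pow_le_pow_right₀ (by norm_num) hlt) hu0.le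
          have h4 := h2.2
          have h5 := h1.1
          linarith
      have hsub : ∀ j ∈ Finset.range J, B j ⊆ {ω | d n < rho lam c 0 ω} := by
        intro j _ ω hω
        rw [Set.mem_setOf_eq, rhoiff]
        have h1 : c 0 ω < u * 2^(j+1) := hω.2.2
        have h2 : tG * 2^(j+1) < c ((0:ℤ)-1) ω := hω.1
        have h3 : Real.exp lam * d n * c 0 ω < Real.exp lam * d n * (u * 2^(j+1)) :=
          mul_lt_mul_of_pos_left h1 (by positivity)
        have h4 : Real.exp lam * d n * (u * 2^(j+1)) = tG * 2^(j+1) := by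
          calc Real.exp lam * d n * (u * 2^(j+1))
              = (Real.exp lam * d n * u) * 2^(j+1) := by ring
            _ = tG * 2^(j+1) := by rw [hukey]
        linarith
      calc ∑ j ∈ Finset.range J, G (tG * 2^(j+1)) * pj j
          = ∑ j ∈ Finset.range J, (P (B j)).toReal := by
            apply Finset.sum_congr rfl
            intro j _
            exact (prodm 0 (tG * 2^(j+1)) (Set.Ico (u * 2^j) (u * 2^(j+1)))
              measurableSet_Ico).symm
        _ = (P (⋃ j ∈ Finset.range J, B j)).toReal := by
            rw [measure_biUnion_finset hdisj (fun b _ => hBm b),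
              ENNReal.toReal_sum (fun a _ => hfin _)]
        _ ≤ F (d n) := pmono (Set.iUnion₂_subset hsub)
    have hbig : (P (⋃ j ∈ Finset.range J, AS j)).toReal ≤
        ∑ j ∈ Finset.range J, (P (AS j)).toReal := by
      calc (P (⋃ j ∈ Finset.range J, AS j)).toReal
          ≤ (∑ j ∈ Finset.range J, P (AS j)).toReal := by
            apply ENNReal.toReal_mono
            · exact (ENNReal.sum_lt_top.2 (fun a _ => (measure_lt_top P _))).ne
            · exact measure_biUnion_finset_le (Finset.range J) AS
        _ = ∑ j ∈ Finset.range J, (P (AS j)).toReal :=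
            ENNReal.toReal_sum (fun a _ => hfin _)
    have hsum4 : ∑ j ∈ Finset.range J, (P (AS j)).toReal ≤
        θG⁻¹ * θG'⁻¹ * Real.exp (-(β * q)) * F (d n) := by
      calc ∑ j ∈ Finset.range J, (P (AS j)).toReal
          ≤ ∑ j ∈ Finset.range J,
              θG⁻¹ * θG'⁻¹ * Real.exp (-(β * q)) * (G (tG * 2^(j+1)) * pj j) :=
            Finset.sum_le_sum (fun j _ => hbAS j)
        _ = θG⁻¹ * θG'⁻¹ * Real.exp (-(β * q)) *
              ∑ j ∈ Finset.range J, G (tG * 2^(j+1)) * pj j := by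
            rw [← Finset.mul_sum]
        _ ≤ θG⁻¹ * θG'⁻¹ * Real.exp (-(β * q)) * F (d n) := by
            apply mul_le_mul_of_nonneg_left hsumlb
            have h1 : (0:ℝ) < θG⁻¹ * θG'⁻¹ := mul_pos (inv_pos.2 hθG0) (inv_pos.2 hθG'0)
            positivity
    have hub : (P {ω | T < rho lam c x ω}).toReal ≤
        (P A0).toReal + ((P A1).toReal + ((P Atop).toReal +
          ∑ j ∈ Finset.range J, (P (AS j)).toReal)) := by
      calc (P {ω | T < rho lam c x ω}).toReal
          ≤ (P (A0 ∪ (A1 ∪ (Atop ∪ ⋃ j ∈ Finset.range J, AS j)))).toReal := pmono hcover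
        _ ≤ (P A0).toReal + (P (A1 ∪ (Atop ∪ ⋃ j ∈ Finset.range J, AS j))).toReal :=
            punion _ _
        _ ≤ (P A0).toReal + ((P A1).toReal +
              (P (Atop ∪ ⋃ j ∈ Finset.range J, AS j)).toReal) := by
            have := punion A1 (Atop ∪ ⋃ j ∈ Finset.range J, AS j)
            linarith
        _ ≤ (P A0).toReal + ((P A1).toReal + ((P Atop).toReal +
              (P (⋃ j ∈ Finset.range J, AS j)).toReal)) := by
            have := punion Atop (⋃ j ∈ Finset.range J, AS j)
            linarith
        _ ≤ (P A0).toReal + ((P A1).toReal + ((P Atop).toReal +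
              ∑ j ∈ Finset.range J, (P (AS j)).toReal)) := by
            linarith [hbig]
    have htotal : (P {ω | T < rho lam c x ω}).toReal ≤
        Cst * Real.exp (-(β * q)) * F (d n) := by
      have e1 : Cst * Real.exp (-(β * q)) * F (d n) =
          θH⁻¹ * (G tG)⁻¹ * Real.exp (-(β * q)) * F (d n) +
          (θG⁻¹ * Real.exp (-(β * q)) * F (d n) +
          (θG⁻¹ * (H (1/2))⁻¹ * Real.exp (-(β * q)) * F (d n) +
          θG⁻¹ * θG'⁻¹ * Real.exp (-(β * q)) * F (d n))) := by
        rw [hCstdef]; ring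
      rw [e1]
      linarith [hub, hbA0, hbA1, hbAtop, hsum4]
    have hfinal : Cst * Real.exp (-(β * q)) * F (d n) ≤ 2 * Cst * Real.exp (-(β * q)) / n := by
      have h1 : 0 ≤ Cst * Real.exp (-(β * q)) := by positivity
      calc Cst * Real.exp (-(β * q)) * F (d n)
          ≤ Cst * Real.exp (-(β * q)) * (2 / n) := mul_le_mul_of_nonneg_left hFdn h1
        _ = 2 * Cst * Real.exp (-(β * q)) / n := by ring
    exact le_trans htotal hfinal
  obtain ⟨N0, hN02, hkey⟩ := key
  -- dyadic blocks and Borel-Cantelli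
  have hne : ∀ k : ℕ, (Finset.Ico (2^k) (2^(k+1))).Nonempty :=
    fun k => Finset.nonempty_Ico.2 (Nat.pow_lt_pow_succ (by norm_num))
  set mk : ℕ → ℝ := fun k =>
    (Finset.Ico (2^k) (2^(k+1))).inf' (hne k) (fun n => d n * Real.exp (qseq n)) with hmk
  set E : ℕ → Set Ω := fun k =>
    ⋃ x ∈ Finset.Icc (-(2^(k+1) : ℤ)) ((2^(k+1) : ℤ)), {ω | mk k < rho lam c x ω} with hE
  have hqmono : ∀ m n : ℕ, 1 ≤ m → m ≤ n → qseq m ≤ qseq n := by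
    intro m n h1 h2
    have hm0 : (0:ℝ) < (m:ℝ) := by exact_mod_cast Nat.lt_of_lt_of_le Nat.zero_lt_one h1
    have hn0 : (0:ℝ) < (n:ℝ) := lt_of_lt_of_le hm0 (by exact_mod_cast h2)
    have hlog : Real.log (m:ℝ) ≤ Real.log (n:ℝ) :=
      (Real.log_le_log_iff hm0 hn0).2 (by exact_mod_cast h2)
    have hlognn : 0 ≤ Real.log (m:ℝ) := Real.log_nonneg (by exact_mod_cast h1)
    exact Real.rpow_le_rpow hlognn hlog (by norm_num)
  have h5C : (0:ℝ) ≤ 5 * (2*Cst) := by linarith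
  have hEbound : ∀ k : ℕ, N0 ≤ 2^k →
      P (E k) ≤ ENNReal.ofReal (5 * (2*Cst) * Real.exp (-(β * qseq (2^k)))) := by
    intro k hk
    obtain ⟨nst, hnstmem, hmkeq⟩ :=
      Finset.exists_mem_eq_inf' (hne k) (fun n => d n * Real.exp (qseq n))
    rw [Finset.mem_Ico] at hnstmem
    have hnst1 : (1:ℕ) ≤ 2^k := Nat.one_le_two_pow
    have hnstN0 : N0 ≤ nst := le_trans hk hnstmem.1
    have hcast2k : ((2^k : ℕ) : ℝ) = (2:ℝ)^k := by push_cast; ring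
    have h2k0 : (0:ℝ) < (2:ℝ)^k := by positivity
    have hnstR : (2:ℝ)^k ≤ (nst:ℝ) := by
      rw [← hcast2k]; exact_mod_cast hnstmem.1
    have hb2 : ∀ x : ℤ, P {ω | mk k < rho lam c x ω} ≤
        ENNReal.ofReal (2*Cst * Real.exp (-(β * qseq (2^k))) / 2^k) := by
      intro x
      rw [← ENNReal.ofReal_toReal (hfin {ω | mk k < rho lam c x ω})]
      apply ENNReal.ofReal_le_ofReal
      have hmkval : mk k = d nst * Real.exp (qseq nst) := by
        rw [hmk]; exact hmkeq
      rw [hmkval]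
      have h2 := hkey nst hnstN0 x
      have h3 : Real.exp (-(β * qseq nst)) ≤ Real.exp (-(β * qseq (2^k))) := by
        apply Real.exp_le_exp.2
        have h4 := hqmono (2^k) nst hnst1 hnstmem.1
        have h5 := mul_le_mul_of_nonneg_left h4 hβ0.le
        linarith
      have hnst0 : (0:ℝ) < (nst:ℝ) := lt_of_lt_of_le h2k0 hnstR
      calc (P {ω | d nst * Real.exp (qseq nst) < rho lam c x ω}).toReal
          ≤ 2*Cst * Real.exp (-(β * qseq nst)) / nst := h2
        _ ≤ 2*Cst * Real.exp (-(β * qseq (2^k))) / 2^k := by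
            apply div_le_div₀ (by positivity)
              (mul_le_mul_of_nonneg_left h3 (by linarith)) h2k0 hnstR
    calc P (E k) ≤ ∑ x ∈ Finset.Icc (-(2^(k+1) : ℤ)) ((2^(k+1) : ℤ)),
          P {ω | mk k < rho lam c x ω} := by
          rw [hE]
          exact measure_biUnion_finset_le _ _
      _ ≤ ∑ x ∈ Finset.Icc (-(2^(k+1) : ℤ)) ((2^(k+1) : ℤ)),
          ENNReal.ofReal (2*Cst * Real.exp (-(β * qseq (2^k))) / 2^k) :=
          Finset.sum_le_sum (fun x _ => hb2 x)
      _ = (Finset.Icc (-(2^(k+1) : ℤ)) ((2^(k+1) : ℤ))).card •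
          ENNReal.ofReal (2*Cst * Real.exp (-(β * qseq (2^k))) / 2^k) :=
          Finset.sum_const _
      _ ≤ ENNReal.ofReal (5 * (2*Cst) * Real.exp (-(β * qseq (2^k)))) := by
          rw [nsmul_eq_mul]
          have hcard : (Finset.Icc (-(2^(k+1) : ℤ)) ((2^(k+1) : ℤ))).card = 2 * 2^(k+1) + 1 := by
            rw [Int.card_Icc]
            rw [show ((2:ℤ)^(k+1) + 1 - -(2^(k+1))) = ((2 * 2^(k+1) + 1 : ℕ) : ℤ) by
              push_cast; ring]
            exact Int.toNat_natCast _
          rw [hcard]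
          rw [← ENNReal.ofReal_natCast (2 * 2^(k+1) + 1), ← ENNReal.ofReal_mul (by positivity)]
          apply ENNReal.ofReal_le_ofReal
          have hcardR : ((2 * 2^(k+1) + 1 : ℕ) : ℝ) = 4 * 2^k + 1 := by push_cast; ring
          rw [hcardR]
          have h1 : (4 * (2:ℝ)^k + 1) ≤ 5 * 2^k := by
            have : (1:ℝ) ≤ 2^k := one_le_pow₀ (by norm_num)
            linarith
          have hexpnn : (0:ℝ) ≤ Real.exp (-(β * qseq (2^k))) := (Real.exp_pos _).le
          calc (4 * (2:ℝ)^k + 1) * (2*Cst * Real.exp (-(β * qseq (2^k))) / 2^k)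
              ≤ 5 * 2^k * (2*Cst * Real.exp (-(β * qseq (2^k))) / 2^k) := by
                apply mul_le_mul_of_nonneg_right h1 (by positivity)
            _ = 5 * (2*Cst) * Real.exp (-(β * qseq (2^k))) := by
                field_simp
    -- summability
  set a : ℕ → ℝ := fun k => 5 * (2*Cst) * Real.exp (-(β * qseq (2^k))) with ha
  have hqk : ∀ k : ℕ, qseq (2^k) = ((k:ℝ) * Real.log 2) ^ ((1:ℝ)/4) := by
    intro k
    show Real.log ((2^k : ℕ) : ℝ) ^ ((1:ℝ)/4) = ((k:ℝ) * Real.log 2) ^ ((1:ℝ)/4)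
    rw [show ((2^k : ℕ) : ℝ) = (2:ℝ)^k by push_cast; ring, Real.log_pow]
  have hsa : Summable a := by
    have hs := (summable_aux β hβ0).mul_left (5 * (2*Cst))
    apply Summable.congr hs
    intro k
    rw [ha]
    simp only []
    rw [hqk k]
  set a' : ℕ → ℝ := fun k => if k < N0 then 1 else a k with ha'
  have hann : ∀ k, 0 ≤ a k := by
    intro k
    rw [ha]
    exact mul_nonneg h5C (Real.exp_pos _).le
  have ha'nn : ∀ k, 0 ≤ a' k := by
    intro k
    rw [ha']
    by_cases hk : k < N0
    · simp [hk]
    · simp only [if_neg hk]; exact hann k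
  have hsa' : Summable a' := by
    apply (summable_nat_add_iff N0).1
    apply Summable.congr ((summable_nat_add_iff N0).2 hsa)
    intro n
    rw [ha']
    simp only [if_neg (by omega : ¬ (n + N0 < N0))]
  have hb' : ∀ k, P (E k) ≤ ENNReal.ofReal (a' k) := by
    intro k
    by_cases hk : k < N0
    · rw [ha']
      simp only [if_pos hk]
      rw [ENNReal.ofReal_one]
      exact prob_le_one
    · rw [ha']
      simp only [if_neg hk]
      apply hEbound k
      have h1 : N0 ≤ k := not_lt.1 hk
      exact le_trans h1 (Nat.lt_two_pow_self (n := k)).le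
  have htsum : ∑' k, P (E k) ≠ ⊤ := by
    have h1 : ∑' k, P (E k) ≤ ∑' k, ENNReal.ofReal (a' k) := ENNReal.tsum_le_tsum hb'
    have h2 : ∑' k, ENNReal.ofReal (a' k) = ENNReal.ofReal (∑' k, a' k) :=
      (ENNReal.ofReal_tsum_of_nonneg ha'nn hsa').symm
    rw [h2] at h1
    exact ne_top_of_le_ne_top ENNReal.ofReal_ne_top h1
  have hBC := MeasureTheory.ae_eventually_notMem htsum
  filter_upwards [hBC] with ω hω
  obtain ⟨K1, hK1⟩ := eventually_atTop.1 hω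
  refine ⟨2^(K1+1), ?_⟩
  intro n hn x hx1 hx2
  have hn0 : n ≠ 0 := by
    have h1 : (1:ℕ) ≤ 2^(K1+1) := Nat.one_le_two_pow
    omega
  set k := Nat.log 2 n with hkdef
  have hk1 : 2^k ≤ n := Nat.pow_log_le_self 2 hn0
  have hk2 : n < 2^(k+1) := Nat.lt_pow_succ_log_self (by norm_num) n
  have hkK : K1 ≤ k := by
    have h1 : K1 + 1 ≤ Nat.log 2 n := (Nat.le_log_iff_pow_le (by norm_num) hn0).2 hn
    omega
  have hnotE := hK1 k hkK
  by_contra hcon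
  push_neg at hcon
  apply hnotE
  rw [hE]
  have hxmem : x ∈ Finset.Icc (-(2^(k+1) : ℤ)) ((2^(k+1) : ℤ)) := by
    rw [Finset.mem_Icc]
    have hcast : (n:ℤ) ≤ 2^(k+1) := by exact_mod_cast hk2.le
    constructor
    · linarith
    · linarith
  refine Set.mem_biUnion hxmem ?_
  rw [Set.mem_setOf_eq]
  have hmle : mk k ≤ d n * Real.exp (qseq n) := by
    rw [hmk]
    exact Finset.inf'_le _ (Finset.mem_Ico.2 ⟨hk1, hk2⟩)
  exact lt_of_le_of_lt hmle hcon
end
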